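/- Let F be a fixed finite family of graphs, each connected and with at least one edge, at least one of which is planar and subcubic. Let {X_i}_{i∈I} be a bouquet attached to U in a graph G, and suppose Δ ⊆ E(G) is such that all the connected components of G − Δ that intersect U ∪ ⋃_{i∈I} X_i are F-free. Then OPT_F(G) = OPT_F(G'), where G' is obtained from G by removing the vertices of all except d_F + |Δ| elements of the bouquet. -/

import Mathlib

open Classical

attribute [local instance] Classical.propDecidable

noncomputable section

/-- A finite multigraph without loops: finitely many vertices, finitely many
edges (parallel edges are allowed since `E` is an abstract edge type),
each edge having two distinct endpoints. -/
structure Multigraph : Type 1 where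
  V : Type
  E : Type
  fintypeV : Fintype V
  fintypeE : Fintype E
  ends : E → Sym2 V
  loopless : ∀ e : E, ¬ (ends e).IsDiag

attribute [instance] Multigraph.fintypeV Multigraph.fintypeE

theorem sym2_map_not_isDiag {α β : Type} {f : α → β} (hf : Function.Injective f) :
    ∀ {p : Sym2 α}, ¬ p.IsDiag → ¬ (p.map f).IsDiag := by
  intro p
  induction p using Sym2.ind with
  | _ x y =>
    intro hp h
    rw [Sym2.map_pair_eq, Sym2.mk_isDiag_iff] at h
    exact hp (by rw [Sym2.mk_isDiag_iff]; exact hf h)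

theorem sym2_isDiag_of_map {α β : Type} (f : α → β) (p : Sym2 α)
    (hinj : ∀ x ∈ p, ∀ y ∈ p, f x = f y → x = y)
    (h : (p.map f).IsDiag) : p.IsDiag := by
  induction p using Sym2.ind with
  | _ a b =>
    rw [Sym2.map_pair_eq, Sym2.mk_isDiag_iff] at h
    rw [Sym2.mk_isDiag_iff]
    exact hinj a (Sym2.mem_mk_left a b) b (Sym2.mem_mk_right a b) h

namespace Multigraph

/-- `|G|`: the number of vertices of `G`. -/
def numVerts (G : Multigraph) : ℕ := Fintype.card G.V

/-- `‖G‖`: the number of edges of `G` (with multiplicities). -/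
def numEdges (G : Multigraph) : ℕ := Fintype.card G.E

/-- The degree of a vertex: the number of incident edges. -/
def degree (G : Multigraph) (v : G.V) : ℕ := {e : G.E | v ∈ G.ends e}.ncard

/-- A graph is subcubic if every vertex has degree at most `3`. -/
def Subcubic (G : Multigraph) : Prop := ∀ v : G.V, G.degree v ≤ 3

/-- The graph `G - D` obtained by deleting the set `D` of edges. -/
def deleteEdges (G : Multigraph) (D : Finset G.E) : Multigraph where
  V := G.V
  E := {e : G.E // e ∉ D}
  fintypeV := G.fintypeV
  fintypeE := Fintype.ofFinite _
  ends := fun e => G.ends e.1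
  loopless := fun e => G.loopless e.1

/-- Walks in a multigraph, recorded as sequences of edges together with
compatible endpoints. -/
inductive Walk (G : Multigraph) : G.V → G.V → Type
  | nil (v : G.V) : Walk G v v
  | cons {u v w : G.V} (e : G.E) (h : G.ends e = s(u, v)) (p : Walk G v w) : Walk G u w

/-- The list of edges traversed by a walk. -/
def Walk.edges {G : Multigraph} : {u v : G.V} → Walk G u v → List G.E
  | _, _, .nil _ => []
  | _, _, .cons e _ p => e :: p.edges

/-- The list of vertices visited by a walk. -/
def Walk.support {G : Multigraph} : {u v : G.V} → Walk G u v → List G.V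
  | u, _, .nil _ => [u]
  | u, _, .cons _ _ p => u :: p.support

/-- A walk is a path if it has no repeated vertices. -/
def Walk.IsPath {G : Multigraph} {u v : G.V} (p : Walk G u v) : Prop := p.support.Nodup

def Reachable (G : Multigraph) (u v : G.V) : Prop := Nonempty (Walk G u v)

/-- A multigraph is connected if it is nonempty and every two vertices are
joined by a walk. -/
def Connected (G : Multigraph) : Prop := Nonempty G.V ∧ ∀ u v : G.V, G.Reachable u v

/-- The vertex set of the connected component of `v`. -/
def component (G : Multigraph) (v : G.V) : Set G.V := {u | G.Reachable u v}

/-- Reachability inside a set `S` of vertices, i.e. reachability in `G[S]`. -/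
def ReachIn (G : Multigraph) (S : Set G.V) (u v : G.V) : Prop :=
  ∃ p : Walk G u v, ∀ x ∈ p.support, x ∈ S

/-- The induced subgraph `G[S]` is connected. -/
def ConnectedOn (G : Multigraph) (S : Set G.V) : Prop :=
  ∀ u ∈ S, ∀ v ∈ S, G.ReachIn S u v

/-- The number of connected components of the induced subgraph `G[S]`, expressed
as the maximum size of a family of vertices of `S` that are pairwise
non-connected within `S`. -/
def compCount (G : Multigraph) (S : Set G.V) : ℕ :=
  sSup {n | ∃ f : Fin n → G.V, (∀ i, f i ∈ S) ∧
    ∀ i j, i ≠ j → ¬ G.ReachIn S (f i) (f j)}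

/-- The set of edges of the induced subgraph `G[X]`. -/
def inducedEdges (G : Multigraph) (X : Set G.V) : Set G.E :=
  {e | ∀ v ∈ G.ends e, v ∈ X}

/-- The edge boundary `δ(X)`: edges with exactly one endpoint in `X`. -/
def edgeBoundary (G : Multigraph) (X : Set G.V) : Set G.E :=
  {e | ∃ u v : G.V, G.ends e = s(u, v) ∧ u ∈ X ∧ v ∉ X}

/-- The (open) neighbourhood `N(S)`. -/
def nbhd (G : Multigraph) (S : Set G.V) : Set G.V :=
  {u | u ∉ S ∧ ∃ (e : G.E) (v : G.V), v ∈ S ∧ G.ends e = s(u, v)}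

/-- All parallel edges between `u` and `v`. -/
def parallelEdges (G : Multigraph) (u v : G.V) : Set G.E := {e | G.ends e = s(u, v)}

/-- Planarity of a multigraph, via a topological embedding in the plane:
vertices map injectively to points, edges map to arcs between the images of
their endpoints, and two arcs may only meet at images of common endpoints. -/
def Planar (G : Multigraph) : Prop :=
  ∃ f : G.V → ℝ × ℝ, Function.Injective f ∧
    ∃ γ : G.E → ℝ → ℝ × ℝ,
      (∀ e, ContinuousOn (γ e) (Set.Icc 0 1)) ∧
      (∀ e, Set.InjOn (γ e) (Set.Icc 0 1)) ∧
      (∀ e, ∃ u v : G.V, G.ends e = s(u, v) ∧ γ e 0 = f u ∧ γ e 1 = f v) ∧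
      (∀ (e : G.E) (v : G.V), f v ∈ γ e '' Set.Icc 0 1 → v ∈ G.ends e) ∧
      (∀ e e' : G.E, e ≠ e' →
        ∀ pt ∈ γ e '' Set.Icc 0 1 ∩ γ e' '' Set.Icc 0 1, ∃ v : G.V, pt = f v)

/-- The disjoint union `G ⊎ H` of two multigraphs. -/
def disjUnion (G H : Multigraph) : Multigraph where
  V := G.V ⊕ H.V
  E := G.E ⊕ H.E
  fintypeV := Fintype.ofFinite _
  fintypeE := Fintype.ofFinite _
  ends := Sum.elim (fun e => (G.ends e).map Sum.inl) (fun e => (H.ends e).map Sum.inr)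
  loopless := by
    rintro (e | e) h
    · exact sym2_map_not_isDiag Sum.inl_injective (G.loopless e) h
    · exact sym2_map_not_isDiag Sum.inr_injective (H.loopless e) h

/-- The induced subgraph `G[S]` (equivalently, `G` with the vertices outside
`S` deleted). -/
def induce (G : Multigraph) (S : Set G.V) : Multigraph where
  V := ↥S
  E := {e : G.E // ∀ v ∈ G.ends e, v ∈ S}
  fintypeV := Fintype.ofFinite _
  fintypeE := Fintype.ofFinite _
  ends := fun e =>
    Sym2.map (fun a => if ha : a ∈ S then (⟨a, ha⟩ : ↥S)
      else ⟨(Quot.out (G.ends e.1)).1, e.2 _ (Sym2.out_fst_mem _)⟩) (G.ends e.1)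
  loopless := by
    intro e h
    apply G.loopless e.1
    refine sym2_isDiag_of_map _ _ (fun x hx' y hy' hf => ?_) h
    have hx : x ∈ S := e.2 x hx'
    have hy : y ∈ S := e.2 y hy'
    simp only [dif_pos hx, dif_pos hy] at hf
    exact congrArg Subtype.val hf

/-- Build a multigraph from a simple graph. -/
def ofSimple {V : Type} [Fintype V] (G : SimpleGraph V) : Multigraph where
  V := V
  E := G.edgeSet
  fintypeV := ‹Fintype V›
  fintypeE := Fintype.ofFinite _
  ends := Subtype.val
  loopless := fun e => SimpleGraph.not_isDiag_of_mem_edgeSet G e.2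

end Multigraph

open Multigraph

/-- An immersion of `H` into `G`: an injection on vertices together with
pairwise edge-disjoint paths in `G` joining the images of the endpoints of
the edges of `H`. -/
structure Immersion (H G : Multigraph) where
  vmap : H.V → G.V
  vmap_inj : Function.Injective vmap
  esrc : H.E → H.V
  etgt : H.E → H.V
  ends_eq : ∀ e : H.E, H.ends e = s(esrc e, etgt e)
  emap : (e : H.E) → Multigraph.Walk G (vmap (esrc e)) (vmap (etgt e))
  emap_path : ∀ e : H.E, (emap e).IsPath
  edge_disjoint : ∀ e e' : H.E, e ≠ e' → ∀ x : G.E, x ∈ (emap e).edges → x ∉ (emap e').edges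

/-- `G` contains `H` as an immersion. -/
def ContainsImm (G H : Multigraph) : Prop := Nonempty (Immersion H G)

/-- `G` is `F`-immersion-free. -/
def FFree {ι : Type} (F : ι → Multigraph) (G : Multigraph) : Prop :=
  ∀ i : ι, ¬ ContainsImm G (F i)

/-- The induced subgraph `G[X]` is `F`-immersion-free: there is no immersion
model of a member of `F` living entirely inside `X`. -/
def FFreeOn {ι : Type} (F : ι → Multigraph) (G : Multigraph) (X : Set G.V) : Prop :=
  ∀ i : ι, ¬ ∃ M : Immersion (F i) G, (∀ v, M.vmap v ∈ X) ∧
    ∀ (e : (F i).E), ∀ x ∈ (M.emap e).support, x ∈ X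

/-- `OPT_F(G)`: the minimum size of an edge set whose deletion makes `G`
`F`-immersion-free. -/
def OPT {ι : Type} (F : ι → Multigraph) (G : Multigraph) : ℕ :=
  sInf {k | ∃ D : Finset G.E, D.card = k ∧ FFree F (G.deleteEdges D)}

/-- `H` belongs to the immersion-obstruction set of the class `C`:
`H ∉ C` and every proper immersion of `H` belongs to `C`. -/
def InObsIm (C : Multigraph → Prop) (H : Multigraph) : Prop :=
  ¬ C H ∧ ∀ H' : Multigraph, ContainsImm H H' → ¬ ContainsImm H' H → C H'

/-- `MAX_F`: the maximum number of edges of a member of the family. -/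
def maxEdges {ι : Type} [Fintype ι] (F : ι → Multigraph) : ℕ :=
  Finset.univ.sup fun i => (F i).numEdges

/-- The underlying asymmetric adjacency relation of the `n × n` wall. -/
def wallRel (n : ℕ) (a b : Fin n × Fin (2 * n)) : Prop :=
  (a.1 = b.1 ∧ (a.2 : ℕ) + 1 = (b.2 : ℕ)) ∨
  (a.2 = b.2 ∧ (a.1 : ℕ) + 1 = (b.1 : ℕ) ∧ ((a.1 : ℕ) + (a.2 : ℕ)) % 2 = 0)

/-- The `n × n` wall graph `W_{n,n}`. -/
def Wall (n : ℕ) : Multigraph := Multigraph.ofSimple (SimpleGraph.fromRel (wallRel n))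

/-- A graph parameter is closed under immersions. -/
def ImmersionClosed (p : Multigraph → ℕ) : Prop :=
  ∀ G H : Multigraph, ContainsImm G H → p H ≤ p G

/-- A graph parameter is closed under disjoint unions. -/
def DisjUnionClosed (p : Multigraph → ℕ) : Prop :=
  ∀ G H : Multigraph, p (G.disjUnion H) = max (p G) (p H)

/-- A graph parameter is large on walls. -/
def LargeOnWalls (p : Multigraph → ℕ) : Prop :=
  (Set.range fun n : ℕ => p (Wall n)).Infinite

/-- The parameter `p_r`: the minimum number of edge deletions needed to bring
the value of `p` down to at most `r`. -/
def pAtMost (p : Multigraph → ℕ) (r : ℕ) (G : Multigraph) : ℕ :=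
  sInf {k | ∃ S : Finset G.E, S.card ≤ k ∧ p (G.deleteEdges S) ≤ r}

/-- A tree-cut decomposition of `G`: a forest `T` on node set `N` together with
a near-partition of `V(G)` into bags, such that the trees of the forest
correspond exactly to the connected components of `G`. -/
structure TreeCutDecomp (G : Multigraph) : Type 1 where
  N : Type
  fintypeN : Fintype N
  T : SimpleGraph N
  acyclic : T.IsAcyclic
  bag : N → Finset G.V
  nodeOf : G.V → N
  mem_bag : ∀ v : G.V, v ∈ bag (nodeOf v)
  bag_disjoint : ∀ t t' : N, t ≠ t' → Disjoint (bag t) (bag t')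
  comp_compat : ∀ u v : G.V, G.Reachable u v ↔ T.Reachable (nodeOf u) (nodeOf v)
  trees_used : ∀ t : N, ∃ v : G.V, T.Reachable t (nodeOf v)

attribute [instance] TreeCutDecomp.fintypeN

/-- A multigraph with a marked set of core vertices; the remaining vertices
are peripheral.  (Used for torsos and 3-centers.) -/
structure MarkedGraph : Type 1 where
  G : Multigraph
  core : Set G.V

/-- The vertex `z` has exactly two incident edges, one to `a` and one to `b`. -/
def SuppPair (G : Multigraph) (z a b : G.V) : Prop :=
  ∃ e1 e2 : G.E, e1 ≠ e2 ∧ G.ends e1 = s(z, a) ∧ G.ends e2 = s(z, b) ∧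
    ∀ e : G.E, z ∈ G.ends e → e = e1 ∨ e = e2

/-- `M'` is obtained from `M` by suppressing one peripheral vertex of degree at
most two (deleting any resulting loop). -/
def Suppresses (M M' : MarkedGraph) : Prop :=
  ∃ z : M.G.V, z ∉ M.core ∧ M.G.degree z ≤ 2 ∧
    ∃ fV : M'.G.V ≃ {v : M.G.V // v ≠ z},
      (∀ w : M'.G.V, w ∈ M'.core ↔ (fV w).1 ∈ M.core) ∧
      ((¬ (∃ a b : M.G.V, a ≠ b ∧ SuppPair M.G z a b) ∧
          ∃ fE : M'.G.E ≃ {e : M.G.E // z ∉ M.G.ends e},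
            ∀ e : M'.G.E, Sym2.map (fun w => (fV w).1) (M'.G.ends e) = M.G.ends (fE e).1) ∨
        (∃ a b : M.G.V, a ≠ b ∧ SuppPair M.G z a b ∧
          ∃ fE : M'.G.E ≃ ({e : M.G.E // z ∉ M.G.ends e} ⊕ Unit),
            ∀ e : M'.G.E, Sym2.map (fun w => (fV w).1) (M'.G.ends e) =
              Sum.elim (fun e' : {e : M.G.E // z ∉ M.G.ends e} => M.G.ends e'.1)
                (fun _ => s(a, b)) (fE e)))

/-- No peripheral vertex can be suppressed any more. -/
def MarkedGraph.Terminal (M : MarkedGraph) : Prop :=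
  ∀ z : M.G.V, z ∉ M.core → 2 < M.G.degree z

namespace TreeCutDecomp

variable {G : Multigraph}

/-- `X_{T_{ab}}`: the union of the bags on the side of `a` of the tree edge `ab`. -/
def side (D : TreeCutDecomp G) (a b : D.N) : Set G.V :=
  {v | (D.T.deleteEdges {s(a, b)}).Reachable (D.nodeOf v) a}

/-- The adhesion of the tree edge `ab`: the edges of `G` crossing between the
two sides. -/
def adh (D : TreeCutDecomp G) (a b : D.N) : Set G.E :=
  {e | ∃ u v : G.V, G.ends e = s(u, v) ∧ u ∈ D.side a b ∧ v ∈ D.side b a}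

/-- `w(t) = |X_t| + #{neighbours with bold adhesion}`. -/
def wval (D : TreeCutDecomp G) (t : D.N) : ℕ :=
  (D.bag t).card + {t' : D.N | D.T.Adj t t' ∧ 2 < (D.adh t t').ncard}.ncard

/-- The maximum adhesion size of the decomposition. -/
def maxAdh (D : TreeCutDecomp G) : ℕ :=
  Finset.univ.sup fun pq : D.N × D.N =>
    if D.T.Adj pq.1 pq.2 then (D.adh pq.1 pq.2).ncard else 0

/-- `width'` of a tree-cut decomposition. -/
def width' (D : TreeCutDecomp G) : ℕ :=
  max D.maxAdh (Finset.univ.sup fun t => D.wval t)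

/-- `z(t) = |X_t| + Σ_{e ∋ t, |adh(e)| ≥ 3} |adh(e)|`. -/
def zval (D : TreeCutDecomp G) (t : D.N) : ℕ :=
  (D.bag t).card + ∑ t' : D.N,
    if D.T.Adj t t' ∧ 3 ≤ (D.adh t t').ncard then (D.adh t t').ncard else 0

/-- `width''` of a tree-cut decomposition. -/
def width'' (D : TreeCutDecomp G) : ℕ := Finset.univ.sup fun t => D.zval t

/-- A tree-cut decomposition is connected if both sides of every tree edge
induce connected subgraphs of `G`. -/
def IsConnectedDecomp (D : TreeCutDecomp G) : Prop :=
  ∀ a b : D.N, D.T.Adj a b → G.ConnectedOn (D.side a b) ∧ G.ConnectedOn (D.side b a)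

/-- The vertex type of the torso at `t`: the core vertices (the bag at `t`)
together with one peripheral vertex for each component of `T - t` inside the
tree of `t` (equivalently, for each neighbour of `t`). -/
def TorsoV (D : TreeCutDecomp G) (t : D.N) : Type :=
  {v : G.V // v ∈ D.bag t} ⊕ {x : D.N // D.T.Adj t x}

/-- The projection of the vertices of `G` to the vertices of the torso at `t`
(defined on the connected component of `G` corresponding to the tree of `t`). -/
def torsoProj (D : TreeCutDecomp G) (t : D.N) (v : G.V) : Option (D.TorsoV t) :=
  if h : v ∈ D.bag t then some (Sum.inl ⟨v, h⟩)
  else if h2 : ∃ x : {x : D.N // D.T.Adj t x},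
      (D.T.deleteEdges {e : Sym2 D.N | t ∈ e}).Reachable (D.nodeOf v) x.1
    then some (Sum.inr h2.choose)
  else none

/-- The torso of the decomposition at the node `t` (as a multigraph): each
component of `T - t` is consolidated to a single peripheral vertex, and the
resulting loops are deleted. -/
instance instFintypeTorsoV (D : TreeCutDecomp G) (t : D.N) : Fintype (D.TorsoV t) := by
  unfold TorsoV; infer_instance

def torsoGraph (D : TreeCutDecomp G) (t : D.N) : Multigraph where
  V := D.TorsoV t
  E := {e : G.E // ∃ a b : D.TorsoV t, a ≠ b ∧
        Sym2.map (D.torsoProj t) (G.ends e) = s(some a, some b)}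
  fintypeV := inferInstance
  fintypeE := Fintype.ofFinite _
  ends := fun e => s(e.2.choose, e.2.choose_spec.choose)
  loopless := fun e hd => e.2.choose_spec.choose_spec.1 (Sym2.mk_isDiag_iff.mp hd)

/-- The torso at `t` as a marked graph: the core vertices are the vertices of
the bag at `t`. -/
def torso (D : TreeCutDecomp G) (t : D.N) : MarkedGraph where
  G := D.torsoGraph t
  core := Set.range (Sum.inl : {v : G.V // v ∈ D.bag t} → D.TorsoV t)

/-- The possible numbers of vertices of a 3-center at `t`: the sizes of the
terminal marked graphs obtained from the torso at `t` by exhaustively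
suppressing peripheral vertices of degree at most two. -/
def threeCenterSizes (D : TreeCutDecomp G) (t : D.N) : Set ℕ :=
  {n | ∃ M : MarkedGraph, Relation.ReflTransGen Suppresses (D.torso t) M ∧
    M.Terminal ∧ Fintype.card M.G.V = n}

/-- The width of a tree-cut decomposition: the maximum over all adhesion sizes
and all numbers of vertices of 3-centers. -/
def width (D : TreeCutDecomp G) : ℕ :=
  max D.maxAdh (Finset.univ.sup fun t => sSup (D.threeCenterSizes t))

/-- The component `T_{tp}` of `T - p` is connected with a neat adhesion to `p`:
the adhesion of `tp` is thin and all of its edges have an endpoint in `X_p`. -/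
def NeatAdhesionTo (D : TreeCutDecomp G) (p t : D.N) : Prop :=
  (D.adh t p).ncard ≤ 2 ∧ ∀ e ∈ D.adh t p, ∃ v ∈ D.bag p, v ∈ G.ends e

end TreeCutDecomp

/-- Tree-cut width (via the width with 3-centers). -/
def tcw (G : Multigraph) : ℕ := sInf {k | ∃ D : TreeCutDecomp G, D.width = k}

/-- Tree-cut width via `width'`. -/
def tcw' (G : Multigraph) : ℕ := sInf {k | ∃ D : TreeCutDecomp G, D.width' = k}

/-- A rooted tree-cut decomposition: every tree of the forest gets a root,
encoded by a parent function (roots are their own parents) together with a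
depth function certifying well-foundedness; the parent relation orients all
tree edges. -/
structure RootedTreeCutDecomp (G : Multigraph) extends TreeCutDecomp G where
  parent : N → N
  depth : N → ℕ
  parent_adj : ∀ t : N, parent t ≠ t → T.Adj t (parent t)
  depth_lt : ∀ t : N, parent t ≠ t → depth (parent t) < depth t
  parent_cover : ∀ t t' : N, T.Adj t t' → parent t = t' ∨ parent t' = t

namespace RootedTreeCutDecomp

variable {G : Multigraph}

/-- A rooted tree-cut decomposition is neat: it is connected, and for every
non-root node `t` whose adhesion to its parent is thin and every sibling `t'`
of `t`, there are no edges of `G` between `X_{T_{tπ(t)}}` and `X_{T_{t'π(t)}}`. -/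
def Neat (D : RootedTreeCutDecomp G) : Prop :=
  D.toTreeCutDecomp.IsConnectedDecomp ∧
  ∀ t : D.N, D.parent t ≠ t →
    (D.toTreeCutDecomp.adh t (D.parent t)).ncard ≤ 2 →
    ∀ t' : D.N, t' ≠ t → D.parent t' = D.parent t → D.parent t' ≠ t' →
      ∀ e : G.E, ¬ ∃ u v : G.V, G.ends e = s(u, v) ∧
        u ∈ D.toTreeCutDecomp.side t (D.parent t) ∧
        v ∈ D.toTreeCutDecomp.side t' (D.parent t')

end RootedTreeCutDecomp

/-- An `r`-protrusion: a set of vertices with boundary of size at most `r`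
inducing an `F`-immersion-free subgraph. -/
def IsProtrusion {ι : Type} (F : ι → Multigraph) (G : Multigraph) (r : ℕ) (X : Set G.V) : Prop :=
  (G.edgeBoundary X).ncard ≤ r ∧ FFreeOn F G X

/-- `B` is an excessive protrusion inside the connected component of `G`
containing it (with parameters `b = b_F` and `c = c_F`): it is a
`2b`-protrusion with more than `2bc` induced edges, whose removal from its
component leaves at most two connected components. -/
def IsExcessiveIn {ι : Type} (F : ι → Multigraph) (b c : ℕ) (G : Multigraph)
    (B : Set G.V) : Prop :=
  ∃ v₀ ∈ B, B ⊆ G.component v₀ ∧ IsProtrusion F G (2 * b) B ∧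
    2 * b * c < (G.inducedEdges B).ncard ∧ G.compCount (G.component v₀ \ B) ≤ 2

/-- Some connected component of `G` has an excessive protrusion. -/
def HasExcessive {ι : Type} (F : ι → Multigraph) (b c : ℕ) (G : Multigraph) : Prop :=
  ∃ B : Set G.V, IsExcessiveIn F b c G B

/-- `c` is a valid constant for the protrusion-replacement lemma with width
constant `b`. -/
def ReplacerConst {ι : Type} (F : ι → Multigraph) (b c : ℕ) : Prop :=
  ∀ (G : Multigraph) (X : Set G.V), IsProtrusion F G (2 * b) X →
    c < (G.inducedEdges X).ncard →
    ∃ G' : Multigraph, OPT F G' = OPT F G ∧ G'.numEdges < G.numEdges ∧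
      ∀ D' : Finset G'.E, FFree F (G'.deleteEdges D') →
        ∃ D : Finset G.E, FFree F (G.deleteEdges D) ∧ D.card ≤ D'.card

/-- `G[U ∪ A]` and `G[U ∪ B]` are isomorphic via an isomorphism mapping every
vertex of `U` to itself. -/
def InducedIsoFixing (G : Multigraph) (U A B : Set G.V) : Prop :=
  ∃ φ : G.V → G.V, Set.BijOn φ (U ∪ A) (U ∪ B) ∧ (∀ u ∈ U, φ u = u) ∧
    ∃ ψ : G.E → G.E, Set.BijOn ψ (G.inducedEdges (U ∪ A)) (G.inducedEdges (U ∪ B)) ∧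
      ∀ e ∈ G.inducedEdges (U ∪ A), G.ends (ψ e) = (G.ends e).map φ

/-- A family of pairwise disjoint, connected `2`-protrusions all attached to
`U` and pairwise isomorphic over `U`. -/
def IsBouquetFamily {ι : Type} (F : ι → Multigraph) (G : Multigraph) (U : Set G.V)
    (𝒮 : Set (Set G.V)) : Prop :=
  (∀ S ∈ 𝒮, S.Nonempty ∧ IsProtrusion F G 2 S ∧ G.nbhd S = U ∧ G.ConnectedOn S) ∧
  𝒮.Pairwise (fun S S' => Disjoint S S') ∧
  ∀ S ∈ 𝒮, ∀ S' ∈ 𝒮, InducedIsoFixing G U S S'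

/-- A bouquet attached to `U` (with threshold `d = d_F`): an inclusion-maximal
bouquet family with at least `d` elements. -/
def IsBouquet {ι : Type} (F : ι → Multigraph) (d : ℕ) (G : Multigraph) (U : Set G.V)
    (𝒮 : Set (Set G.V)) : Prop :=
  IsBouquetFamily F G U 𝒮 ∧ d ≤ 𝒮.ncard ∧
  ∀ 𝒮' : Set (Set G.V), 𝒮 ⊆ 𝒮' → IsBouquetFamily F G U 𝒮' → 𝒮' = 𝒮

/-- The edge set of a bouquet: all edges incident to some element of it. -/
def Multigraph.bouquetEdges (G : Multigraph) (𝒮 : Set (Set G.V)) : Set G.E :=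
  {e | ∃ S ∈ 𝒮, ∃ v ∈ G.ends e, v ∈ S}

/-- A theta attached to `{u, v}` (with threshold `d = d_F`): `u` and `v` are
joined by at least `d` parallel edges (the theta itself being the maximal set
of all parallel edges between them). -/
def IsTheta (d : ℕ) (G : Multigraph) (u v : G.V) : Prop :=
  u ≠ v ∧ d ≤ (G.parallelEdges u v).ncard

/-- The constant `d_F = max(2 b_F c_F + 2 b_F, 3 MAX_F) + 1`. -/
def dConst {ι : Type} [Fintype ι] (F : ι → Multigraph) (b c : ℕ) : ℕ :=
  max (2 * b * c + 2 * b) (3 * maxEdges F) + 1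

/-- An `r`-boundaried graph. -/
structure BGraph (r : ℕ) : Type 1 where
  G : Multigraph
  bnd : Fin r → G.V

/-- Gluing two `r`-boundaried graphs: take the disjoint union and add one edge
joining the `i`-th boundary vertices, for each `i`. -/
def glue {r : ℕ} (A B : BGraph r) : Multigraph where
  V := A.G.V ⊕ B.G.V
  E := (A.G.E ⊕ B.G.E) ⊕ Fin r
  fintypeV := Fintype.ofFinite _
  fintypeE := Fintype.ofFinite _
  ends := Sum.elim
    (Sum.elim (fun e => (A.G.ends e).map Sum.inl) (fun e => (B.G.ends e).map Sum.inr))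
    (fun i => s(Sum.inl (A.bnd i), Sum.inr (B.bnd i)))
  loopless := by
    rintro ((e | e) | i) h
    · exact sym2_map_not_isDiag Sum.inl_injective (A.G.loopless e) h
    · exact sym2_map_not_isDiag Sum.inr_injective (B.G.loopless e) h
    · simp only [Sum.elim_inr, Sym2.mk_isDiag_iff] at h
      exact Sum.inl_ne_inr h

/-- The extended graph `Ĝ` of an `r`-boundaried graph: add a new pendant vertex
`û_i` adjacent exactly to the `i`-th boundary vertex, for each `i`. -/
def BGraph.extend {r : ℕ} (A : BGraph r) : Multigraph where
  V := A.G.V ⊕ Fin r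
  E := A.G.E ⊕ Fin r
  fintypeV := Fintype.ofFinite _
  fintypeE := Fintype.ofFinite _
  ends := Sum.elim (fun e => (A.G.ends e).map Sum.inl)
    (fun i => s(Sum.inl (A.bnd i), Sum.inr i))
  loopless := by
    rintro (e | i) h
    · exact sym2_map_not_isDiag Sum.inl_injective (A.G.loopless e) h
    · simp only [Sum.elim_inr, Sym2.mk_isDiag_iff] at h
      exact Sum.inl_ne_inr h

/-- A relevant pair `(Q, φ)`: a graph with at most `(r+1)·MAX_F` edges and no
isolated vertices together with a nonempty partial map from its vertices to `[r]`. -/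
def RelevantPair (r m : ℕ) (Q : Multigraph) (φ : Q.V → Option (Fin r)) : Prop :=
  Q.numEdges ≤ (r + 1) * m ∧ (∀ v : Q.V, ∃ e : Q.E, v ∈ Q.ends e) ∧ ∃ v i, φ v = some i

/-- `Ĝ - D` admits a `φ`-rooted immersion model of `Q`: an immersion model of
`Q` mapping every vertex in the domain of `φ` to the corresponding copy `û_i`. -/
def HasRootedModel {r : ℕ} (A : BGraph r) (D : Finset A.extend.E)
    (Q : Multigraph) (φ : Q.V → Option (Fin r)) : Prop :=
  ∃ M : Immersion Q (A.extend.deleteEdges D),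
    ∀ (v : Q.V) (i : Fin r), φ v = some i → M.vmap v = Sum.inr i

/-- The deletion number of an `r`-boundaried graph with respect to a set `S` of
relevant pairs: the minimum number of edges of `Ĝ` whose deletion leaves no
`φ`-rooted immersion model of `Q`, for every `(Q, φ) ∈ S`. -/
def delNum {r : ℕ} (A : BGraph r)
    (S : ∀ Q : Multigraph, (Q.V → Option (Fin r)) → Prop) : ℕ :=
  sInf {k | ∃ D : Finset A.extend.E, D.card = k ∧
    ∀ (Q : Multigraph) (φ : Q.V → Option (Fin r)), S Q φ → ¬ HasRootedModel A D Q φ}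

/-- Two `r`-boundaried graphs have the same signature: their deletion numbers
agree on every set of relevant pairs. -/
def SameSig {r : ℕ} (m : ℕ) (A B : BGraph r) : Prop :=
  ∀ S : ∀ Q : Multigraph, (Q.V → Option (Fin r)) → Prop,
    (∀ Q φ, S Q φ → RelevantPair r m Q φ) → delNum A S = delNum B S

/-- `F`-equivalence of `r`-boundaried graphs. -/
def FEquiv {ι : Type} (F : ι → Multigraph) {r : ℕ} (A B : BGraph r) : Prop :=
  ∀ C : BGraph r, OPT F (glue A C) = OPT F (glue B C)

/-! ### Auxiliary machinery for the proof of `bouquet_pruning` -/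

section Aux

namespace Multigraph

variable {G : Multigraph}

theorem ends_rep (G : Multigraph) (e : G.E) : ∃ a b : G.V, G.ends e = s(a, b) ∧ a ≠ b := by
  have hl := G.loopless e
  generalize hq : G.ends e = p at hl ⊢
  induction p using Sym2.ind with
  | _ a b =>
    exact ⟨a, b, rfl, fun h => hl (Sym2.mk_isDiag_iff.mpr h)⟩

theorem sym2_eq_of_mem {α : Type} {p : Sym2 α} {a b : α} (ha : a ∈ p) (hb : b ∈ p)
    (hab : a ≠ b) : p = s(a, b) := by
  induction p using Sym2.ind with
  | _ x y =>
    rw [Sym2.mem_iff] at ha hb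
    rcases ha with rfl | rfl <;> rcases hb with rfl | rfl
    · exact absurd rfl hab
    · rfl
    · exact Sym2.eq_swap
    · exact absurd rfl hab

theorem sym2_map_congr {α β : Type} {f g : α → β} {p : Sym2 α}
    (h : ∀ x ∈ p, f x = g x) : p.map f = p.map g := by
  induction p using Sym2.ind with
  | _ x y =>
    rw [Sym2.map_pair_eq, Sym2.map_pair_eq, h x (by simp), h y (by simp)]

namespace Walk

theorem start_mem_support : ∀ {u v : G.V} (p : Walk G u v), u ∈ p.support
  | _, _, .nil _ => by simp [Walk.support]
  | _, _, .cons _ _ _ => by simp [Walk.support]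

theorem end_mem_support : ∀ {u v : G.V} (p : Walk G u v), v ∈ p.support
  | _, _, .nil _ => by simp [Walk.support]
  | _, _, .cons _ _ q => by simp [Walk.support, end_mem_support q]

theorem head?_support : ∀ {u v : G.V} (p : Walk G u v), p.support.head? = some u
  | _, _, .nil _ => rfl
  | _, _, .cons _ _ _ => rfl

def append : ∀ {u v w : G.V}, Walk G u v → Walk G v w → Walk G u w
  | _, _, _, .nil _, q => q
  | _, _, _, .cons e h p, q => .cons e h (append p q)

def reverse : ∀ {u v : G.V}, Walk G u v → Walk G v u
  | _, _, .nil u => .nil u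
  | _, _, .cons e h p => (reverse p).append (.cons e (by rw [h, Sym2.eq_swap]) (.nil _))

/-- Every vertex of the support of a walk is reachable from the start. -/
theorem reachable_of_mem_support : ∀ {u v : G.V} (p : Walk G u v) (x : G.V),
    x ∈ p.support → G.Reachable u x
  | u, _, .nil _, x, hx => by
    simp only [Walk.support, List.mem_singleton] at hx
    exact ⟨hx ▸ .nil u⟩
  | u, v, .cons e h p, x, hx => by
    simp only [Walk.support, List.mem_cons] at hx
    rcases hx with rfl | hx
    · exact ⟨.nil x⟩
    · obtain ⟨q⟩ := reachable_of_mem_support p x hx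
      exact ⟨.cons e h q⟩

theorem support_chain' : ∀ {u v : G.V} (p : Walk G u v),
    List.Chain' (fun a b => ∃ e : G.E, G.ends e = s(a, b)) p.support
  | _, _, .nil u => by simp [Walk.support]; exact List.isChain_singleton _
  | u, v, .cons e h p => by
    simp only [Walk.support]
    unfold List.Chain'; rw [List.isChain_cons]
    refine ⟨?_, support_chain' p⟩
    intro y hy
    rw [head?_support p] at hy
    obtain rfl : y = _ := (Option.mem_some_iff.mp hy).symm
    exact ⟨e, h⟩

/-- Both endpoints of an edge used by a walk lie on its support. -/
theorem mem_support_of_mem_edges : ∀ {u v : G.V} (p : Walk G u v) (e : G.E)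
    (_ : e ∈ p.edges) (x : G.V) (_ : x ∈ G.ends e), x ∈ p.support
  | _, _, .nil _, e, he, x, hx => by simp [Walk.edges] at he
  | u, v, .cons f h p, e, he, x, hx => by
    simp only [Walk.edges, List.mem_cons] at he
    simp only [Walk.support, List.mem_cons]
    rcases he with rfl | he
    · rw [h, Sym2.mem_iff] at hx
      rcases hx with rfl | rfl
      · exact Or.inl rfl
      · exact Or.inr (start_mem_support p)
    · exact Or.inr (mem_support_of_mem_edges p e he x hx)

/-- The support of a walk is contained in any set containing the start and
closed under edges. -/
theorem support_subset_closed {S : Set G.V}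
    (hcl : ∀ x y : G.V, x ∈ S → (∃ e : G.E, G.ends e = s(x, y)) → y ∈ S) :
    ∀ {u v : G.V} (p : Walk G u v) (_ : u ∈ S) (x : G.V) (_ : x ∈ p.support), x ∈ S
  | u, _, .nil _, hu, x, hx => by
    simp only [Walk.support, List.mem_singleton] at hx; exact hx ▸ hu
  | u, v, .cons e h p, hu, x, hx => by
    simp only [Walk.support, List.mem_cons] at hx
    rcases hx with rfl | hx
    · exact hu
    · exact support_subset_closed hcl p (hcl _ _ hu ⟨e, h⟩) x hx

end Walk

theorem Reachable.refl (u : G.V) : G.Reachable u u := ⟨Walk.nil u⟩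

theorem Reachable.symm {u v : G.V} (h : G.Reachable u v) : G.Reachable v u :=
  ⟨h.some.reverse⟩

theorem Reachable.trans {u v w : G.V} (h : G.Reachable u v) (h' : G.Reachable v w) :
    G.Reachable u w := ⟨h.some.append h'.some⟩

end Multigraph

end Aux
section Aux2

namespace Multigraph

variable {G : Multigraph}

namespace Walk

/-- Mapping a walk along a pair of maps compatible with endpoints. -/
def mapIm {A B : Multigraph} (f : A.V → B.V) (g : A.E → B.E)
    (hg : ∀ e, B.ends (g e) = (A.ends e).map f) :
    ∀ {u v : A.V}, Walk A u v → Walk B (f u) (f v)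
  | _, _, .nil u => .nil (f u)
  | _, _, .cons e h p => .cons (g e) (by rw [hg, h, Sym2.map_pair_eq]) (mapIm f g hg p)

theorem support_mapIm {A B : Multigraph} (f : A.V → B.V) (g : A.E → B.E)
    (hg : ∀ e, B.ends (g e) = (A.ends e).map f) :
    ∀ {u v : A.V} (p : Walk A u v), (p.mapIm f g hg).support = p.support.map f
  | _, _, .nil u => rfl
  | _, _, .cons e h p => by
    simp only [mapIm, Walk.support, List.map_cons, support_mapIm f g hg p]

theorem edges_mapIm {A B : Multigraph} (f : A.V → B.V) (g : A.E → B.E)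
    (hg : ∀ e, B.ends (g e) = (A.ends e).map f) :
    ∀ {u v : A.V} (p : Walk A u v), (p.mapIm f g hg).edges = p.edges.map g
  | _, _, .nil u => rfl
  | _, _, .cons e h p => by
    simp only [mapIm, Walk.edges, List.map_cons, edges_mapIm f g hg p]

/-- Restricting a walk to a graph with a different set of deleted edges,
provided the walk avoids the new deleted set. -/
def restrictE {D₁ D₂ : Finset G.E} :
    ∀ {u v : G.V} (p : Walk (G.deleteEdges D₁) u v)
      (_ : ∀ e ∈ p.edges, (e : {e : G.E // e ∉ D₁}).1 ∉ D₂), Walk (G.deleteEdges D₂) u v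
  | _, _, .nil u, _ => Walk.nil (G := G.deleteEdges D₂) u
  | _, _, .cons e h p, hp =>
      Walk.cons (G := G.deleteEdges D₂) ⟨e.1, hp e (by simp [Walk.edges])⟩ h
        (restrictE p fun e' he' => hp e' (by simp [Walk.edges, he']))

theorem support_restrictE {D₁ D₂ : Finset G.E} :
    ∀ {u v : G.V} (p : Walk (G.deleteEdges D₁) u v) (hp : _),
      (p.restrictE (D₂ := D₂) hp).support = p.support
  | _, _, .nil u, _ => by simp only [restrictE, Walk.support]; exact rfl
  | _, _, .cons e h p, hp => by
    simp only [restrictE, Walk.support]; exact congrArg (List.cons _) (support_restrictE p _)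

theorem edges_restrictE {D₁ D₂ : Finset G.E} :
    ∀ {u v : G.V} (p : Walk (G.deleteEdges D₁) u v) (hp : _),
      (p.restrictE (D₂ := D₂) hp).edges.map Subtype.val = p.edges.map Subtype.val
  | _, _, .nil u, _ => by simp only [restrictE, Walk.edges, List.map_nil]; exact rfl
  | _, _, .cons e h p, hp => by
    simp only [restrictE, Walk.edges]; exact congrArg (List.cons _) (edges_restrictE p _)

end Walk

theorem induce_ends_eq {S : Set G.V} (f : (G.induce S).E) {u v : G.V}
    (h : G.ends f.1 = s(u, v)) (hu : u ∈ S) (hv : v ∈ S) :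
    (G.induce S).ends f = s((⟨u, hu⟩ : ↥S), (⟨v, hv⟩ : ↥S)) := by
  show Sym2.map _ (G.ends f.1) = _
  refine (congrArg _ h).trans ?_
  rw [Sym2.map_pair_eq, dif_pos hu, dif_pos hv]

theorem induce_ends_val {S : Set G.V} (f : (G.induce S).E) :
    ((G.induce S).ends f).map Subtype.val = G.ends f.1 := by
  show (Sym2.map _ (G.ends f.1)).map Subtype.val = G.ends f.1
  rw [Sym2.map_map]
  have hcong : ∀ x ∈ G.ends f.1,
      (Subtype.val ∘ fun a =>
        if ha : a ∈ S then (⟨a, ha⟩ : ↥S)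
        else ⟨(Quot.out (G.ends f.1)).1, f.2 _ (Sym2.out_fst_mem _)⟩) x = id x := by
    intro x hx
    simp only [Function.comp_apply, id_eq]
    rw [dif_pos (f.2 x hx)]
  rw [sym2_map_congr hcong, Sym2.map_id]
  rfl

namespace Walk

/-- Restricting a walk into an induced subgraph containing its support,
packaged with its support and edge lists. -/
def restrictV {D : Finset G.E} {S : Set G.V} :
    ∀ {u v : G.V} (p : Walk (G.deleteEdges D) u v)
      (_ : ∀ x ∈ p.support, x ∈ S) (hu : u ∈ S) (hv : v ∈ S),
      {q : Walk ((G.induce S).deleteEdges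
          (Finset.univ.filter (fun f : (G.induce S).E => f.1 ∈ D))) ⟨u, hu⟩ ⟨v, hv⟩ //
        q.support.map Subtype.val = p.support ∧
        q.edges.map (fun f => f.1.1) = p.edges.map Subtype.val}
  | _, _, .nil u, _, hu, hv =>
    ⟨Walk.nil (G := (G.induce S).deleteEdges
        (Finset.univ.filter (fun f : (G.induce S).E => f.1 ∈ D))) ⟨u, hu⟩, rfl, rfl⟩
  | u, v, .cons (v := w) e h p, hs, hu, hv =>
    have hw : w ∈ S := hs w (by
      simp only [Walk.support, List.mem_cons]
      exact List.mem_cons_of_mem _ (start_mem_support p))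
    have hind : ∀ x ∈ G.ends e.1, x ∈ S := by
      intro x hx
      rw [show G.ends e.1 = s(u, w) from h] at hx
      rcases Sym2.mem_iff.mp hx with rfl | rfl
      · exact hu
      · exact hw
    have hmem : (⟨e.1, hind⟩ : (G.induce S).E) ∉
        Finset.univ.filter (fun f : (G.induce S).E => f.1 ∈ D) := by
      intro hf
      exact e.2 (Finset.mem_filter.mp hf).2
    have htail := restrictV p
      (fun x hx => hs x (by simp only [Walk.support, List.mem_cons]; exact List.mem_cons_of_mem _ hx)) hw hv
    ⟨Walk.cons ⟨⟨e.1, hind⟩, hmem⟩ (induce_ends_eq _ h hu hw) htail.1, by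
      exact ⟨congrArg (List.cons _) htail.2.1, congrArg (List.cons _) htail.2.2⟩⟩

end Walk

end Multigraph

end Aux2
section Aux3

open Multigraph Multigraph.Walk

/-- The set of all vertices appearing on some path of the immersion. -/
def Immersion.allSupp {H A : Multigraph} (M : Immersion H A) : Set A.V :=
  {x | ∃ e : H.E, x ∈ (M.emap e).support}

/-- Transport of an immersion along an injective graph embedding. -/
def Immersion.transport {H A B : Multigraph} (M : Immersion H A)
    (f : A.V → B.V) (g : A.E → B.E) (hf : Function.Injective f)
    (hg : Function.Injective g) (hends : ∀ e, B.ends (g e) = (A.ends e).map f) :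
    Immersion H B where
  vmap := f ∘ M.vmap
  vmap_inj := hf.comp M.vmap_inj
  esrc := M.esrc
  etgt := M.etgt
  ends_eq := M.ends_eq
  emap := fun e => (M.emap e).mapIm f g hends
  emap_path := fun e => by
    have := M.emap_path e
    unfold Walk.IsPath at this ⊢
    rw [support_mapIm]
    exact this.map hf
  edge_disjoint := by
    intro e e' hee x hx hx'
    rw [edges_mapIm] at hx hx'
    obtain ⟨y, hy, hyx⟩ := List.mem_map.mp hx
    obtain ⟨y', hy', hyx'⟩ := List.mem_map.mp hx'
    obtain rfl : y = y' := hg (hyx.trans hyx'.symm)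
    exact M.edge_disjoint e e' hee y hy hy'

theorem Immersion.allSupp_transport {H A B : Multigraph} (M : Immersion H A)
    (f : A.V → B.V) (g : A.E → B.E) (hf : Function.Injective f)
    (hg : Function.Injective g) (hends : ∀ e, B.ends (g e) = (A.ends e).map f) :
    (M.transport f g hf hg hends).allSupp = f '' M.allSupp := by
  ext x
  simp only [Immersion.allSupp, Immersion.transport, Set.mem_setOf_eq, Set.mem_image]
  constructor
  · rintro ⟨e, hx⟩
    rw [support_mapIm] at hx
    obtain ⟨y, hy, rfl⟩ := List.mem_map.mp hx
    exact ⟨y, ⟨e, hy⟩, rfl⟩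
  · rintro ⟨y, ⟨e, hy⟩, rfl⟩
    exact ⟨e, by rw [support_mapIm]; exact List.mem_map_of_mem hy⟩

/-- Restriction of an immersion to a graph with other deleted edges, provided
all used edges avoid the new deleted set. -/
def Immersion.restrictE {H G : Multigraph} {D₁ D₂ : Finset G.E}
    (M : Immersion H (G.deleteEdges D₁))
    (hall : ∀ (e : H.E) (x : {e : G.E // e ∉ D₁}), x ∈ (M.emap e).edges → x.1 ∉ D₂) :
    Immersion H (G.deleteEdges D₂) where
  vmap := M.vmap
  vmap_inj := M.vmap_inj
  esrc := M.esrc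
  etgt := M.etgt
  ends_eq := M.ends_eq
  emap := fun e => (M.emap e).restrictE (hall e)
  emap_path := fun e => by
    show ((M.emap e).restrictE (hall e)).support.Nodup
    have h := support_restrictE (M.emap e) (hall e)
    rw [h]
    exact M.emap_path e
  edge_disjoint := by
    intro e e' hee x hx hx'
    have h1 : x.1 ∈ ((M.emap e).restrictE (hall e)).edges.map Subtype.val :=
      List.mem_map_of_mem hx
    have h2 : x.1 ∈ ((M.emap e').restrictE (hall e')).edges.map Subtype.val :=
      List.mem_map_of_mem hx'
    replace h1 := (congrArg (x.1 ∈ ·) (edges_restrictE (D₂ := D₂) (M.emap e) (hall e))).mp h1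
    replace h2 := (congrArg (x.1 ∈ ·) (edges_restrictE (D₂ := D₂) (M.emap e') (hall e'))).mp h2
    obtain ⟨y, hy, hyx⟩ := List.mem_map.mp h1
    obtain ⟨y', hy', hyx'⟩ := List.mem_map.mp h2
    obtain rfl : y = y' := Subtype.ext (hyx.trans hyx'.symm)
    exact M.edge_disjoint e e' hee y hy hy'

theorem Immersion.allSupp_restrictE {H G : Multigraph} {D₁ D₂ : Finset G.E}
    (M : Immersion H (G.deleteEdges D₁)) (hall : _) :
    (M.restrictE (D₂ := D₂) hall).allSupp = M.allSupp := by
  ext x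
  simp only [Immersion.allSupp, Immersion.restrictE, Set.mem_setOf_eq]
  refine exists_congr fun e => ?_
  have h := support_restrictE (M.emap e) (hall e)
  rw [h]
  exact Iff.rfl

/-- Restriction of an immersion to an induced subgraph containing it. -/
def Immersion.restrictV {H G : Multigraph} {D : Finset G.E} {S : Set G.V}
    (M : Immersion H (G.deleteEdges D))
    (hs : ∀ (e : H.E), ∀ x ∈ (M.emap e).support, x ∈ S)
    (hv : ∀ v, M.vmap v ∈ S) :
    Immersion H ((G.induce S).deleteEdges
      (Finset.univ.filter (fun f : (G.induce S).E => f.1 ∈ D))) where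
  vmap := fun v => ⟨M.vmap v, hv v⟩
  vmap_inj := fun a b hab => M.vmap_inj (congrArg Subtype.val hab)
  esrc := M.esrc
  etgt := M.etgt
  ends_eq := M.ends_eq
  emap := fun e => ((M.emap e).restrictV (hs e) (hv _) (hv _)).1
  emap_path := fun e => by
    have hnd := M.emap_path e
    unfold Walk.IsPath at hnd ⊢
    have := ((M.emap e).restrictV (hs e) (hv _) (hv _)).2.1
    rw [← this] at hnd
    exact hnd.of_map
  edge_disjoint := by
    intro e e' hee x hx hx'
    have h1 : x.1.1 ∈ (((M.emap e).restrictV (hs e) (hv _) (hv _)).1).edges.map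
        (fun f => f.1.1) := List.mem_map_of_mem hx
    have h2 : x.1.1 ∈ (((M.emap e').restrictV (hs e') (hv _) (hv _)).1).edges.map
        (fun f => f.1.1) := List.mem_map_of_mem hx'
    rw [((M.emap e).restrictV (hs e) (hv _) (hv _)).2.2] at h1
    rw [((M.emap e').restrictV (hs e') (hv _) (hv _)).2.2] at h2
    obtain ⟨y, hy, hyx⟩ := List.mem_map.mp h1
    obtain ⟨y', hy', hyx'⟩ := List.mem_map.mp h2
    obtain rfl : y = y' := Subtype.ext (hyx.trans hyx'.symm)
    exact M.edge_disjoint e e' hee y hy hy'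

/-- Every image of the vertex map lies on some path (for connected patterns
with an edge). -/
theorem Immersion.vmap_mem_allSupp {H A : Multigraph} (M : Immersion H A)
    (hconn : H.Connected) (hedge : Nonempty H.E) (v : H.V) :
    M.vmap v ∈ M.allSupp := by
  obtain ⟨e₀⟩ := hedge
  have hreach := hconn.2 v (M.esrc e₀)
  obtain ⟨w⟩ := hreach
  cases w with
  | nil =>
    exact ⟨e₀, start_mem_support _⟩
  | cons e h q =>
    have hv : v ∈ H.ends e := by rw [h]; exact Sym2.mem_mk_left _ _
    rw [M.ends_eq e, Sym2.mem_iff] at hv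
    rcases hv with rfl | rfl
    · exact ⟨e, start_mem_support _⟩
    · exact ⟨e, end_mem_support _⟩

/-- All vertices used by an immersion of a connected pattern are mutually
reachable. -/
theorem Immersion.allSupp_reachable {H A : Multigraph} (M : Immersion H A)
    (hconn : H.Connected) :
    ∀ x ∈ M.allSupp, ∀ y ∈ M.allSupp, A.Reachable x y := by
  have key : ∀ a b : H.V, A.Reachable (M.vmap a) (M.vmap b) := by
    intro a b
    obtain ⟨w⟩ := hconn.2 a b
    induction w with
    | nil => exact Reachable.refl _
    | cons e h q ih =>
      rename_i a' c' w'
      have bridg : A.Reachable (M.vmap a') (M.vmap c') := by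
        have : s(M.esrc e, M.etgt e) = s(a', c') := by rw [← M.ends_eq e, h]
        rw [Sym2.eq_iff] at this
        rcases this with ⟨h1, h2⟩ | ⟨h1, h2⟩
        · exact h1 ▸ h2 ▸ ⟨M.emap e⟩
        · exact h1 ▸ h2 ▸ ⟨(M.emap e).reverse⟩
      exact bridg.trans ih
  rintro x ⟨e₁, hx⟩ y ⟨e₂, hy⟩
  have r1 : A.Reachable (M.vmap (M.esrc e₁)) x := reachable_of_mem_support _ x hx
  have r2 : A.Reachable (M.vmap (M.esrc e₂)) y := reachable_of_mem_support _ y hy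
  exact (r1.symm.trans (key (M.esrc e₁) (M.esrc e₂))).trans r2

end Aux3
section Aux4

open Multigraph Multigraph.Walk

theorem FFree_deleteEdges_univ {ι : Type} (F : ι → Multigraph)
    (hedge : ∀ i, Nonempty (F i).E) (G : Multigraph) :
    FFree F (G.deleteEdges Finset.univ) := by
  rintro i ⟨M⟩
  obtain ⟨e₀⟩ := hedge i
  have hne : M.esrc e₀ ≠ M.etgt e₀ := by
    intro h
    exact (F i).loopless e₀ (by rw [M.ends_eq e₀, h]; exact Sym2.mk_isDiag_iff.mpr rfl)
  have hne' : M.vmap (M.esrc e₀) ≠ M.vmap (M.etgt e₀) := fun h => hne (M.vmap_inj h)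
  have key : ∀ (a b : (G.deleteEdges (Finset.univ : Finset G.E)).V),
      a ≠ b → Walk (G.deleteEdges (Finset.univ : Finset G.E)) a b → False := by
    intro a b hab w
    cases w with
    | nil => exact hab rfl
    | cons e h p => exact e.2 (Finset.mem_univ e.1)
  exact key _ _ hne' (M.emap e₀)

theorem OPT_le {ι : Type} (F : ι → Multigraph) (G : Multigraph) {D : Finset G.E}
    (h : FFree F (G.deleteEdges D)) : OPT F G ≤ D.card :=
  Nat.sInf_le ⟨D, rfl, h⟩

theorem OPT_spec {ι : Type} (F : ι → Multigraph) (hedge : ∀ i, Nonempty (F i).E)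
    (G : Multigraph) :
    ∃ D : Finset G.E, D.card = OPT F G ∧ FFree F (G.deleteEdges D) := by
  have hne : {k | ∃ D : Finset G.E, D.card = k ∧ FFree F (G.deleteEdges D)}.Nonempty :=
    ⟨(Finset.univ : Finset G.E).card, Finset.univ, rfl, FFree_deleteEdges_univ F hedge G⟩
  exact Nat.sInf_mem hne

theorem ncard_biUnion_le {ι α : Type} [Finite α] (t : Finset ι) (s : ι → Set α) :
    (⋃ i ∈ t, s i).ncard ≤ ∑ i ∈ t, (s i).ncard := by
  classical
  induction t using Finset.induction with
  | empty => simp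
  | insert _ _ hx ih =>
    rename_i a t'
    rw [Finset.set_biUnion_insert, Finset.sum_insert hx]
    exact le_trans (Set.ncard_union_le _ _) (Nat.add_le_add le_rfl ih)

theorem ncard_iUnion_le {ι α : Type} [Fintype ι] [Finite α] (s : ι → Set α) :
    (⋃ i, s i).ncard ≤ ∑ i : ι, (s i).ncard := by
  have : (⋃ i, s i) = ⋃ i ∈ (Finset.univ : Finset ι), s i := by simp
  rw [this]
  exact ncard_biUnion_le _ _

/-- Key counting lemma: a path (no repeated vertices) meets at most `3`
members of a family of pairwise disjoint sets, all with neighbourhood `U`,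
`|U| ≤ 2`. -/
theorem touch_bound_list {G : Multigraph} {U : Set G.V} {𝒮 : Set (Set G.V)}
    (hdisj : 𝒮.Pairwise Disjoint)
    (hnbhd : ∀ T ∈ 𝒮, G.nbhd T = U) (hU : U.ncard ≤ 2)
    (l : List G.V) (hnd : l.Nodup)
    (hch : List.Chain' (fun a b => ∃ e : G.E, G.ends e = s(a, b)) l) :
    {T | T ∈ 𝒮 ∧ ∃ x ∈ l, x ∈ T}.ncard ≤ 3 := by
  classical
  set TS := {T | T ∈ 𝒮 ∧ ∃ x ∈ l, x ∈ T} with hTS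
  set f : Set G.V → Option G.V := fun T =>
    if h : ∃ k : ℕ, ∃ hk : k < l.length, l.get ⟨k, hk⟩ ∈ T then
      (if Nat.find h = 0 then none else l[Nat.find h - 1]?)
    else none with hf
  have hex : ∀ T ∈ TS, ∃ k : ℕ, ∃ hk : k < l.length, l.get ⟨k, hk⟩ ∈ T := by
    rintro T ⟨hT𝒮, x, hxl, hxT⟩
    obtain ⟨k, hk⟩ := List.mem_iff_get.mp hxl
    exact ⟨k.1, k.2, hk ▸ hxT⟩
  -- basic facts about the first index
  have hmemfirst : ∀ (T : Set G.V) (h : ∃ k : ℕ, ∃ hk : k < l.length, l.get ⟨k, hk⟩ ∈ T),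
      ∃ hk : Nat.find h < l.length, l.get ⟨Nat.find h, hk⟩ ∈ T := fun T h => Nat.find_spec h
  have hprevU : ∀ (T : Set G.V) (hT : T ∈ TS)
      (h : ∃ k : ℕ, ∃ hk : k < l.length, l.get ⟨k, hk⟩ ∈ T) (hk0 : Nat.find h ≠ 0),
      ∃ hlt : Nat.find h - 1 < l.length, l.get ⟨Nat.find h - 1, hlt⟩ ∈ U := by
    intro T hT h hk0
    obtain ⟨hk, hkT⟩ := hmemfirst T h
    have hlt : Nat.find h - 1 < l.length := by omega
    refine ⟨hlt, ?_⟩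
    have hnotT : l.get ⟨Nat.find h - 1, hlt⟩ ∉ T := by
      intro hcon
      exact Nat.find_min h (show Nat.find h - 1 < Nat.find h by omega) ⟨hlt, hcon⟩
    have hadj := List.isChain_iff_getElem.mp hch (Nat.find h - 1) (by omega)
    have hidx : (⟨Nat.find h - 1 + 1, by omega⟩ : Fin l.length) = ⟨Nat.find h, hk⟩ :=
      Fin.ext (by simp; omega)
    simp only [Nat.sub_add_cancel (Nat.pos_of_ne_zero hk0)] at hadj
    obtain ⟨e, he⟩ := hadj
    rw [← hnbhd T hT.1]
    exact ⟨hnotT, e, l.get ⟨Nat.find h, hk⟩, hkT, he⟩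
  have hmaps : ∀ T ∈ TS, f T ∈ insert none (Option.some '' U) := by
    intro T hT
    have h := hex T hT
    rw [hf]
    simp only [dif_pos h]
    by_cases hk0 : Nat.find h = 0
    · simp [hk0]
    · obtain ⟨hlt, hU'⟩ := hprevU T hT h hk0
      rw [if_neg hk0, List.getElem?_eq_getElem hlt]
      exact Set.mem_insert_of_mem _ ⟨_, hU', rfl⟩
  have hinj : Set.InjOn f TS := by
    intro T hT T' hT' hfeq
    by_contra hne
    have hdis := hdisj hT.1 hT'.1 hne
    have h := hex T hT
    have h' := hex T' hT'
    rw [hf] at hfeq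
    simp only [dif_pos h, dif_pos h'] at hfeq
    by_cases hk0 : Nat.find h = 0 <;> by_cases hk0' : Nat.find h' = 0
    · -- both first indices are 0
      obtain ⟨hk, hkT⟩ := hmemfirst T h
      obtain ⟨hk', hkT'⟩ := hmemfirst T' h'
      have : l.get ⟨Nat.find h, hk⟩ = l.get ⟨Nat.find h', hk'⟩ := by
        congr 1
        exact Fin.ext (by simp [hk0, hk0'])
      exact Set.disjoint_left.mp hdis hkT (this ▸ hkT')
    · rw [if_pos hk0, if_neg hk0'] at hfeq
      obtain ⟨hlt', -⟩ := hprevU T' hT' h' hk0'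
      rw [List.getElem?_eq_getElem hlt'] at hfeq
      exact nomatch hfeq
    · rw [if_neg hk0, if_pos hk0'] at hfeq
      obtain ⟨hlt, -⟩ := hprevU T hT h hk0
      rw [List.getElem?_eq_getElem hlt] at hfeq
      exact nomatch hfeq
    · rw [if_neg hk0, if_neg hk0'] at hfeq
      obtain ⟨hlt, -⟩ := hprevU T hT h hk0
      obtain ⟨hlt', -⟩ := hprevU T' hT' h' hk0'
      rw [List.getElem?_eq_getElem hlt, List.getElem?_eq_getElem hlt'] at hfeq
      have := Option.some.inj hfeq
      have hidx : (⟨Nat.find h - 1, hlt⟩ : Fin l.length) = ⟨Nat.find h' - 1, hlt'⟩ :=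
        (List.Nodup.get_inj_iff hnd).mp this
      have hkk : Nat.find h = Nat.find h' := by
        have := Fin.mk.injEq .. ▸ hidx
        have h1 : Nat.find h - 1 = Nat.find h' - 1 := Fin.mk.inj_iff.mp hidx
        omega
      obtain ⟨hk, hkT⟩ := hmemfirst T h
      obtain ⟨hk', hkT'⟩ := hmemfirst T' h'
      have : l.get ⟨Nat.find h, hk⟩ = l.get ⟨Nat.find h', hk'⟩ := by
        congr 1
        exact Fin.ext (by simp [hkk])
      exact Set.disjoint_left.mp hdis hkT (this ▸ hkT')
  have hcard := Set.ncard_le_ncard_of_injOn f hmaps hinj (Set.toFinite _)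
  refine le_trans hcard (le_trans (Set.ncard_insert_le _ _) ?_)
  rw [Set.ncard_image_of_injective _ (Option.some_injective _)]
  omega

end Aux4
section Aux5

open Multigraph Multigraph.Walk

theorem support_chain'_del {G : Multigraph} {D : Finset G.E} {u v : G.V}
    (p : Walk (G.deleteEdges D) u v) :
    List.Chain' (fun a b => ∃ e : G.E, G.ends e = s(a, b)) p.support :=
  (support_chain' p).imp (fun a b h => by obtain ⟨f, hf⟩ := h; exact ⟨f.1, hf⟩)

/-- An immersion meets at most `3‖H‖` members of the bouquet family. -/
theorem touched_bound {H G : Multigraph} {D : Finset G.E}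
    (M : Immersion H (G.deleteEdges D))
    {U : Set G.V} {𝒮 : Set (Set G.V)}
    (hdisj : 𝒮.Pairwise Disjoint)
    (hnbhd : ∀ T ∈ 𝒮, G.nbhd T = U) (hU : U.ncard ≤ 2) :
    {T | T ∈ 𝒮 ∧ ∃ x ∈ M.allSupp, x ∈ T}.ncard ≤ 3 * Fintype.card H.E := by
  have hre : {T | T ∈ 𝒮 ∧ ∃ x ∈ M.allSupp, x ∈ T} =
      ⋃ e : H.E, {T | T ∈ 𝒮 ∧ ∃ x ∈ (M.emap e).support, x ∈ T} := by
    ext T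
    simp only [Immersion.allSupp, Set.mem_setOf_eq, Set.mem_iUnion]
    constructor
    · rintro ⟨hT, x, ⟨e, hx⟩, hxT⟩
      exact ⟨e, hT, x, hx, hxT⟩
    · rintro ⟨e, hT, x, hx, hxT⟩
      exact ⟨hT, x, ⟨e, hx⟩, hxT⟩
  rw [hre]
  refine le_trans (ncard_iUnion_le _) ?_
  have hone : ∀ e : H.E, {T | T ∈ 𝒮 ∧ ∃ x ∈ (M.emap e).support, x ∈ T}.ncard ≤ 3 :=
    fun e => touch_bound_list hdisj hnbhd hU _ (M.emap_path e) (support_chain'_del _)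
  calc ∑ e : H.E, {T | T ∈ 𝒮 ∧ ∃ x ∈ (M.emap e).support, x ∈ T}.ncard
      ≤ ∑ _e : H.E, 3 := Finset.sum_le_sum fun e _ => hone e
    _ = 3 * Fintype.card H.E := by
        rw [Finset.sum_const, Finset.card_univ, smul_eq_mul, Nat.mul_comm]

/-- The edge `e` has an endpoint in `S`. -/
def EInc (G : Multigraph) (S : Set G.V) (e : G.E) : Prop := ∃ x ∈ G.ends e, x ∈ S

/-- `|U| ≤ 2` for a nonempty bouquet family attached to `U`. -/
theorem U_ncard_le {ι : Type} {F : ι → Multigraph} {G : Multigraph} {U : Set G.V}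
    {𝒮 : Set (Set G.V)} (hfam : IsBouquetFamily F G U 𝒮) (hne : 𝒮.Nonempty) :
    U.ncard ≤ 2 := by
  classical
  obtain ⟨S₁, hS₁⟩ := hne
  obtain ⟨-, ⟨hbd, -⟩, hnb, -⟩ := hfam.1 S₁ hS₁
  rcases U.eq_empty_or_nonempty with h | ⟨u₀, hu₀⟩
  · simp [h]
  · have hu₀' : u₀ ∈ G.nbhd S₁ := hnb ▸ hu₀
    obtain ⟨-, e₀, v₀, hv₀, he₀⟩ := hu₀'
    set f : G.V → G.E := fun u =>
      if h : ∃ e : G.E, ∃ v, v ∈ S₁ ∧ G.ends e = s(u, v) then h.choose else e₀ with hfdef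
    have hmaps : ∀ u ∈ U, f u ∈ G.edgeBoundary S₁ := by
      intro u hu
      have hu' : u ∈ G.nbhd S₁ := hnb ▸ hu
      obtain ⟨huS, e, v, hv, he⟩ := hu'
      have hex : ∃ e : G.E, ∃ v, v ∈ S₁ ∧ G.ends e = s(u, v) := ⟨e, v, hv, he⟩
      rw [hfdef]
      simp only [dif_pos hex]
      obtain ⟨v', hv', he'⟩ := hex.choose_spec
      exact ⟨v', u, by rw [he', Sym2.eq_swap], hv', huS⟩
    have hinj : Set.InjOn f U := by
      intro u hu u' hu' hfeq
      have hu2 : u ∈ G.nbhd S₁ := hnb ▸ hu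
      have hu2' : u' ∈ G.nbhd S₁ := hnb ▸ hu'
      obtain ⟨huS, e, v, hv, he⟩ := hu2
      obtain ⟨huS', e', v', hv', he'⟩ := hu2'
      have hex : ∃ e : G.E, ∃ v, v ∈ S₁ ∧ G.ends e = s(u, v) := ⟨e, v, hv, he⟩
      have hex' : ∃ e : G.E, ∃ v, v ∈ S₁ ∧ G.ends e = s(u', v) := ⟨e', v', hv', he'⟩
      rw [hfdef] at hfeq
      simp only [dif_pos hex, dif_pos hex'] at hfeq
      obtain ⟨w, hw, hwend⟩ := hex.choose_spec
      obtain ⟨w', hw', hwend'⟩ := hex'.choose_spec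
      rw [hfeq, hwend'] at hwend
      -- s(u', w') = s(u, w), with u,u' ∉ S₁ and w,w' ∈ S₁
      have humem : u ∈ s(u', w') := hwend ▸ Sym2.mem_mk_left u w
      rw [Sym2.mem_iff] at humem
      rcases humem with rfl | rfl
      · rfl
      · exact absurd hw' huS
    have := Set.ncard_le_ncard_of_injOn f hmaps hinj (Set.toFinite _)
    exact le_trans this hbd

/-- No edge is incident to two distinct members of a bouquet family. -/
theorem EInc_unique {ι : Type} {F : ι → Multigraph} {G : Multigraph} {U : Set G.V}
    {𝒮 : Set (Set G.V)} (hfam : IsBouquetFamily F G U 𝒮)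
    {T T' : Set G.V} (hT : T ∈ 𝒮) (hT' : T' ∈ 𝒮) (e : G.E)
    (h1 : EInc G T e) (h2 : EInc G T' e) : T = T' := by
  by_contra hne
  have hdis := hfam.2.1 hT hT' hne
  obtain ⟨x, hxe, hxT⟩ := h1
  obtain ⟨x', hx'e, hx'T⟩ := h2
  have hxx : x ≠ x' := by
    rintro rfl
    exact Set.disjoint_left.mp hdis hxT hx'T
  have hends : G.ends e = s(x', x) := sym2_eq_of_mem hx'e hxe (Ne.symm hxx)
  have hx'U : x' ∈ U := by
    rw [← (hfam.1 T hT).2.2.1]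
    exact ⟨fun hc => Set.disjoint_left.mp hdis hc hx'T |>.elim, e, x, hxT, hends⟩
  have : x' ∉ T' := by
    have := (hfam.1 T' hT').2.2.1
    rw [← this] at hx'U
    exact hx'U.1
  exact this hx'T

/-- An edge incident to a member of the family is induced in `U ∪ S`. -/
theorem EInc_induced {G : Multigraph} {U S : Set G.V} (hnb : G.nbhd S = U)
    {e : G.E} (h : EInc G S e) : e ∈ G.inducedEdges (U ∪ S) := by
  obtain ⟨x, hxe, hxS⟩ := h
  intro v hv
  by_cases hvS : v ∈ S
  · exact Or.inr hvS
  · have hvx : v ≠ x := by rintro rfl; exact hvS hxS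
    refine Or.inl ?_
    rw [← hnb]
    exact ⟨hvS, e, x, hxS, sym2_eq_of_mem hv hxe hvx⟩

end Aux5
section Aux6

open Multigraph

/-- From an isomorphism over `U` between two disjoint bouquet elements, build
an injective self-map of `G` swapping the two elements. -/
theorem bouquet_exists_swap {G : Multigraph} {U S T : Set G.V}
    (hV : Nonempty G.V) (hST : Disjoint S T)
    (hSnb : G.nbhd S = U) (hTnb : G.nbhd T = U)
    (hiso : InducedIsoFixing G U S T) :
    ∃ (σ : G.V → G.V) (τ : G.E → G.E),
      Function.Injective σ ∧ Function.Injective τ ∧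
      (∀ e, G.ends (τ e) = (G.ends e).map σ) ∧
      (∀ x ∈ S, σ x ∈ T) ∧ (∀ x ∈ T, σ x ∈ S) ∧
      (∀ x, x ∉ S → x ∉ T → σ x = x) ∧
      (∀ e, EInc G S e → EInc G T (τ e)) ∧
      (∀ e, ¬ EInc G S e → EInc G T e → EInc G S (τ e)) ∧
      (∀ e, ¬ EInc G S e → ¬ EInc G T e → τ e = e) := by
  classical
  haveI : Nonempty G.V := hV
  obtain ⟨φ, hφ, hφU, ψ, hψ, hψe⟩ := hiso
  have hSU : ∀ u ∈ U, u ∉ S := fun u hu => ((hSnb ▸ hu : u ∈ G.nbhd S)).1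
  have hTU : ∀ u ∈ U, u ∉ T := fun u hu => ((hTnb ▸ hu : u ∈ G.nbhd T)).1
  have hφS : ∀ x ∈ S, φ x ∈ T := by
    intro x hx
    rcases hφ.mapsTo (Or.inr hx) with h1 | h1
    · exfalso
      have : x = φ x := hφ.injOn (Or.inr hx) (Or.inl h1) (by rw [hφU _ h1])
      exact hSU _ h1 (this ▸ hx)
    · exact h1
  set ρ := Function.invFunOn φ (U ∪ S) with hρdef
  have hρ : ∀ y ∈ U ∪ T, ρ y ∈ U ∪ S ∧ φ (ρ y) = y := by
    intro y hy
    obtain ⟨x, hx, hxy⟩ := hφ.surjOn hy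
    exact ⟨Function.invFunOn_mem ⟨x, hx, hxy⟩, Function.invFunOn_eq ⟨x, hx, hxy⟩⟩
  have hρT : ∀ y ∈ T, ρ y ∈ S := by
    intro y hy
    obtain ⟨hmem, heq⟩ := hρ y (Or.inr hy)
    rcases hmem with h | h
    · exfalso
      have : y ∈ U := by rw [← heq, hφU _ h]; exact h
      exact hTU _ this hy
    · exact h
  have hleft : ∀ x ∈ U ∪ S, ρ (φ x) = x := fun x hx => hφ.injOn.leftInvOn_invFunOn hx
  set σ : G.V → G.V := fun x => if x ∈ S then φ x else if x ∈ T then ρ x else x with hσdef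
  have hσS : ∀ x ∈ S, σ x = φ x := fun x hx => by rw [hσdef]; simp [hx]
  have hσT : ∀ x ∈ T, σ x = ρ x := fun x hx => by
    rw [hσdef]
    simp only [if_neg (Set.disjoint_right.mp hST hx), if_pos hx]
  have hσid : ∀ x, x ∉ S → x ∉ T → σ x = x := fun x h1 h2 => by
    rw [hσdef]; simp [h1, h2]
  have hσσ : ∀ x, σ (σ x) = x := by
    intro x
    by_cases hx : x ∈ S
    · rw [hσS x hx, hσT _ (hφS x hx), hleft x (Or.inr hx)]
    · by_cases hx' : x ∈ T
      · rw [hσT x hx', hσS _ (hρT x hx'), (hρ x (Or.inr hx')).2]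
      · rw [hσid x hx hx', hσid x hx hx']
  have hσinj : Function.Injective σ := Function.LeftInverse.injective hσσ
  rcases isEmpty_or_nonempty G.E with hE | hE
  · refine ⟨σ, id, hσinj, Function.injective_id, fun e => isEmptyElim e, ?_, ?_, hσid,
      fun e => isEmptyElim e, fun e => isEmptyElim e, fun e => isEmptyElim e⟩
    · intro x hx; rw [hσS x hx]; exact hφS x hx
    · intro x hx; rw [hσT x hx]; exact hρT x hx
  -- edges
  have hES_ind : ∀ e, EInc G S e → e ∈ G.inducedEdges (U ∪ S) := fun e h => EInc_induced hSnb h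
  have hET_ind : ∀ e, EInc G T e → e ∈ G.inducedEdges (U ∪ T) := fun e h => EInc_induced hTnb h
  have hψS : ∀ e, EInc G S e → EInc G T (ψ e) := by
    rintro e ⟨x, hx, hxS⟩
    have h1 := hψe e (hES_ind e ⟨x, hx, hxS⟩)
    refine ⟨φ x, ?_, hφS x hxS⟩
    rw [h1, Sym2.mem_map]
    exact ⟨x, hx, rfl⟩
  have hnoS : ∀ e, EInc G S e → ¬ EInc G S (ψ e) := by
    rintro e he ⟨x, hx, hxS⟩
    have hmem := hψ.mapsTo (hES_ind e he) x hx
    rcases hmem with h | h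
    · exact hSU _ h hxS
    · exact Set.disjoint_left.mp hST hxS h
  set ρE := Function.invFunOn ψ (G.inducedEdges (U ∪ S)) with hρEdef
  have hρE : ∀ f ∈ G.inducedEdges (U ∪ T),
      ρE f ∈ G.inducedEdges (U ∪ S) ∧ ψ (ρE f) = f := by
    intro f hf
    obtain ⟨x, hx, hxy⟩ := hψ.surjOn hf
    exact ⟨Function.invFunOn_mem ⟨x, hx, hxy⟩, Function.invFunOn_eq ⟨x, hx, hxy⟩⟩
  have hρET : ∀ f, EInc G T f → EInc G S (ρE f) := by
    rintro f ⟨t, ht, htT⟩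
    obtain ⟨hmem, heq⟩ := hρE f (hET_ind f ⟨t, ht, htT⟩)
    have hends : G.ends f = (G.ends (ρE f)).map φ :=
      (congrArg G.ends heq.symm).trans (hψe (ρE f) hmem)
    rw [hends, Sym2.mem_map] at ht
    obtain ⟨x, hx, hxt⟩ := ht
    rcases hmem x hx with h | h
    · exfalso
      rw [hφU _ h] at hxt
      exact hTU _ (hxt ▸ h) htT
    · exact ⟨x, hx, h⟩
  have hρES : ∀ f, EInc G T f → ¬ EInc G T (ρE f) := by
    rintro f hf ⟨x, hx, hxT⟩
    rcases (hρE f (hET_ind f hf)).1 x hx with h | h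
    · exact hTU _ h hxT
    · exact Set.disjoint_left.mp hST h hxT
  have hleftE : ∀ e ∈ G.inducedEdges (U ∪ S), ρE (ψ e) = e :=
    fun e he => hψ.injOn.leftInvOn_invFunOn he
  set τ : G.E → G.E := fun e =>
    if EInc G S e then ψ e else if EInc G T e then ρE e else e with hτdef
  have hτS : ∀ e, EInc G S e → τ e = ψ e := fun e he => by rw [hτdef]; simp [he]
  have hτT : ∀ e, ¬ EInc G S e → EInc G T e → τ e = ρE e := fun e h1 h2 => by
    rw [hτdef]; simp [h1, h2]
  have hτid : ∀ e, ¬ EInc G S e → ¬ EInc G T e → τ e = e := fun e h1 h2 => by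
    rw [hτdef]; simp [h1, h2]
  have hττ : ∀ e, τ (τ e) = e := by
    intro e
    by_cases he : EInc G S e
    · rw [hτS e he, hτT _ (hnoS e he) (hψS e he), hleftE e (hES_ind e he)]
    · by_cases he' : EInc G T e
      · rw [hτT e he he', hτS _ (hρET e he'), (hρE e (hET_ind e he')).2]
      · rw [hτid e he he', hτid e he he']
  have hτinj : Function.Injective τ := Function.LeftInverse.injective hττ
  have hendsτ : ∀ e, G.ends (τ e) = (G.ends e).map σ := by
    intro e
    by_cases he : EInc G S e
    · rw [hτS e he, hψe e (hES_ind e he)]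
      refine sym2_map_congr ?_ |>.symm
      intro x hx
      rcases hES_ind e he x hx with h | h
      · rw [hσid x (hSU _ h) (hTU _ h), hφU _ h]
      · rw [hσS x h]
    · by_cases he' : EInc G T e
      · rw [hτT e he he']
        obtain ⟨hmem, heq⟩ := hρE e (hET_ind e he')
        have hends : G.ends e = (G.ends (ρE e)).map φ :=
          (congrArg G.ends heq.symm).trans (hψe (ρE e) hmem)
        rw [hends, Sym2.map_map]
        refine ((sym2_map_congr (g := id) ?_).trans (congrFun Sym2.map_id _)).symm
        intro x hx
        rcases hmem x hx with h | h
        · simp only [Function.comp_apply, id_eq]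
          rw [hφU _ h, hσid x (hSU _ h) (hTU _ h)]
        · simp only [Function.comp_apply, id_eq]
          rw [hσT _ (hφS x h), hleft x (Or.inr h)]
      · rw [hτid e he he']
        refine (sym2_map_congr (g := id) ?_).trans (congrFun Sym2.map_id _) |>.symm
        intro x hx
        simp only [id_eq]
        refine (hσid x (fun hc => he ⟨x, hx, hc⟩) (fun hc => he' ⟨x, hx, hc⟩))
  refine ⟨σ, τ, hσinj, hτinj, hendsτ, ?_, ?_, hσid, ?_, ?_, hτid⟩
  · intro x hx; rw [hσS x hx]; exact hφS x hx
  · intro x hx; rw [hσT x hx]; exact hρT x hx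
  · intro e he; rw [hτS e he]; exact hψS e he
  · intro e h1 h2; rw [hτT e h1 h2]; exact hρET e h2

end Aux6
section Aux7

open Multigraph Multigraph.Walk

theorem exchange_bound {ι : Type} (F : ι → Multigraph)
    (hconn : ∀ i, (F i).Connected) (hedge : ∀ i, Nonempty (F i).E)
    {G : Multigraph} {U : Set G.V} {𝒮 : Set (Set G.V)}
    (hfam : IsBouquetFamily F G U 𝒮)
    (Δ : Finset G.E)
    (hΔ : ∀ v : G.V, v ∈ U ∪ ⋃₀ 𝒮 →
      FFreeOn F (G.deleteEdges Δ) {u : G.V | (G.deleteEdges Δ).Reachable u v})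
    (𝒮' : Set (Set G.V)) (h𝒮' : 𝒮' ⊆ 𝒮)
    {S₀ : Set G.V} (hS₀ : S₀ = (⋃₀ (𝒮 \ 𝒮'))ᶜ)
    (D' : Finset (G.induce S₀).E)
    (hfree : FFree F ((G.induce S₀).deleteEdges D'))
    (hopt : ∀ D₂ : Finset (G.induce S₀).E,
      FFree F ((G.induce S₀).deleteEdges D₂) → D'.card ≤ D₂.card) :
    {T | T ∈ 𝒮' ∧ ∃ f ∈ D', EInc G T f.1}.ncard ≤ Δ.card := by
  classical
  set K : Set G.V := {x | ∃ v₀ ∈ U ∪ ⋃₀ 𝒮, (G.deleteEdges Δ).Reachable x v₀} with hK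
  set K' : Set G.V := K ∩ S₀ with hK'
  set P : (G.induce S₀).E → Prop := fun f => ∃ x ∈ G.ends f.1, x ∈ K' with hP
  set A : Finset (G.induce S₀).E := D'.filter (fun f => ¬ P f) with hA
  set B : Finset (G.induce S₀).E :=
    Finset.univ.filter (fun f : (G.induce S₀).E => f.1 ∈ Δ ∧ P f) with hBdef
  have hBmem : ∀ f : (G.induce S₀).E, f.1 ∈ Δ → P f → f ∈ B :=
    fun f h1 h2 => Finset.mem_filter.mpr ⟨Finset.mem_univ _, h1, h2⟩
  have hAmem : ∀ f : (G.induce S₀).E, f ∈ D' → ¬ P f → f ∈ A :=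
    fun f h1 h2 => Finset.mem_filter.mpr ⟨h1, h2⟩
  -- Step I : F'' = A ∪ B is a solution
  have stepI : FFree F ((G.induce S₀).deleteEdges (A ∪ B)) := by
    rintro i ⟨M⟩
    by_cases hmeets : ∃ x ∈ M.allSupp, x.1 ∈ K'
    · -- the model sits inside K', hence inside an F-free component of G - Δ
      obtain ⟨xh, hxhsupp, hxhK⟩ := hmeets
      -- K' is closed under edges of the current graph
      have hcl : ∀ a b : ((G.induce S₀).deleteEdges (A ∪ B)).V,
          a ∈ {z : ((G.induce S₀).deleteEdges (A ∪ B)).V | z.1 ∈ K'} →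
          (∃ e : ((G.induce S₀).deleteEdges (A ∪ B)).E,
            ((G.induce S₀).deleteEdges (A ∪ B)).ends e = s(a, b)) →
          b ∈ {z : ((G.induce S₀).deleteEdges (A ∪ B)).V | z.1 ∈ K'} := by
        rintro a b ha ⟨ee, hee⟩
        have hGends : G.ends ee.1.1 = s(a.1, b.1) := by
          have := induce_ends_val (S := S₀) ee.1
          rw [show (G.induce S₀).ends ee.1 = s(a, b) from hee] at this
          rw [← this]; exact Sym2.map_pair_eq ..
        have hnotΔ : ee.1.1 ∉ Δ := by
          intro hΔmem
          have hPee : P ee.1 := ⟨a.1, by rw [hGends]; exact Sym2.mem_mk_left _ _, ha⟩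
          exact ee.2 (Finset.mem_union_right _ (hBmem _ hΔmem hPee))
        have hreach : (G.deleteEdges Δ).Reachable b.1 a.1 :=
          ⟨Walk.cons (G := G.deleteEdges Δ) ⟨ee.1.1, hnotΔ⟩
            (by show G.ends ee.1.1 = s(b.1, a.1)
                rw [hGends]
                exact Sym2.eq_swap) (Walk.nil (G := G.deleteEdges Δ) a.1)⟩
        obtain ⟨⟨v₀, hv₀, hav₀⟩, haS₀⟩ := ha
        exact ⟨⟨v₀, hv₀, hreach.trans hav₀⟩, ee.1.2 b.1 (by rw [hGends]; exact Sym2.mem_mk_right _ _)⟩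
      have hallK : ∀ y ∈ M.allSupp, y.1 ∈ K' := by
        intro y hy
        obtain ⟨w⟩ := M.allSupp_reachable (hconn i) xh hxhsupp y hy
        exact support_subset_closed hcl w hxhK y (end_mem_support w)
      -- lift to G and restrict to G - Δ
      set FFg : Finset G.E := (A ∪ B).image (fun f => f.1) with hFFg
      have hg : ∀ x : {f : (G.induce S₀).E // f ∉ A ∪ B}, x.1.1 ∉ FFg := by
        rintro x hx
        obtain ⟨f', hf', heq⟩ := Finset.mem_image.mp hx
        exact x.2 (by rwa [show f' = x.1 from Subtype.ext heq] at hf')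
      set gfun : {f : (G.induce S₀).E // f ∉ A ∪ B} → {e : G.E // e ∉ FFg} :=
        fun x => ⟨x.1.1, hg x⟩ with hgfun
      have hginj : Function.Injective gfun := fun a b hab =>
        Subtype.ext (Subtype.ext (congrArg (fun z : {e : G.E // e ∉ FFg} => z.1) hab))
      set M₁ : Immersion (F i) (G.deleteEdges FFg) :=
        M.transport Subtype.val gfun Subtype.val_injective hginj
          (fun x => (induce_ends_val x.1).symm) with hM₁
      have hsupp₁ : ∀ y ∈ M₁.allSupp, y ∈ K' := by
        intro y hy
        replace hy := (congrArg (y ∈ ·) (Immersion.allSupp_transport (B := G.deleteEdges FFg) M Subtype.val gfun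
          Subtype.val_injective hginj (fun x => (induce_ends_val x.1).symm))).mp hy
        obtain ⟨z, hz, rfl⟩ := hy
        exact hallK z hz
      have hall : ∀ (e : (F i).E) (x : {e : G.E // e ∉ FFg}),
          x ∈ (M₁.emap e).edges → x.1 ∉ Δ := by
        intro e x hx hxΔ
        obtain ⟨a0, b0, hab, -⟩ := ends_rep G x.1
        have ha0 : a0 ∈ (M₁.emap e).support :=
          mem_support_of_mem_edges (M₁.emap e) x hx a0
            (by rw [show (G.deleteEdges FFg).ends x = G.ends x.1 from rfl, hab]
                exact Sym2.mem_mk_left _ _)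
        have ha0K : a0 ∈ K' := hsupp₁ a0 ⟨e, ha0⟩
        -- now find the preimage edge and contradict
        have hx' : x ∈ (M.emap e).edges.map gfun := by
          have hE : (M₁.emap e).edges = (M.emap e).edges.map gfun :=
            edges_mapIm _ _ _ (M.emap e)
          rw [← hE]
          exact hx
        obtain ⟨f', hf', heq⟩ := List.mem_map.mp hx'
        have hxf : f'.1.1 = x.1 := show f'.1.1 = x.1 from congrArg Subtype.val heq
        have hPf : P f'.1 := ⟨a0, by rw [hxf, hab]; exact Sym2.mem_mk_left _ _, ha0K⟩
        exact f'.2 (Finset.mem_union_right _ (hBmem _ (by rw [hxf]; exact hxΔ) hPf))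
      set M₂ : Immersion (F i) (G.deleteEdges Δ) := M₁.restrictE hall with hM₂
      have hsupp₂ : ∀ y ∈ M₂.allSupp, y ∈ K' := by
        intro y hy
        rw [hM₂, Immersion.allSupp_restrictE] at hy
        exact hsupp₁ y hy
      -- pick a base point and its component
      have hxh2 : xh.1 ∈ M₂.allSupp := by
        rw [hM₂, Immersion.allSupp_restrictE, hM₁]
        exact (congrArg (xh.1 ∈ ·) (Immersion.allSupp_transport (B := G.deleteEdges FFg) M Subtype.val gfun
          Subtype.val_injective hginj (fun x => (induce_ends_val x.1).symm))).mpr ⟨xh, hxhsupp, rfl⟩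
      obtain ⟨v₀, hv₀, hreach₀⟩ := (hsupp₂ _ hxh2).1
      refine hΔ v₀ hv₀ i ⟨M₂, ?_, ?_⟩
      · intro v
        have hvs : M₂.vmap v ∈ M₂.allSupp := M₂.vmap_mem_allSupp (hconn i) (hedge i) v
        obtain ⟨w⟩ := M₂.allSupp_reachable (hconn i) _ hvs _ hxh2
        exact Reachable.trans ⟨w⟩ hreach₀
      · intro e x hx
        have hxs : x ∈ M₂.allSupp := ⟨e, hx⟩
        obtain ⟨w⟩ := M₂.allSupp_reachable (hconn i) _ hxs _ hxh2
        exact Reachable.trans ⟨w⟩ hreach₀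
    · -- the model avoids K', hence is a model in G' - D'
      push_neg at hmeets
      have hall : ∀ (e : (F i).E) (x : {f : (G.induce S₀).E // f ∉ A ∪ B}),
          x ∈ (M.emap e).edges → x.1 ∉ D' := by
        intro e x hx hxD'
        have hnP : ¬ P x.1 := by
          rintro ⟨z, hz, hzK⟩
          -- z is an endpoint of the edge, so a support vertex
          have : ∃ a : ((G.induce S₀).deleteEdges (A ∪ B)).V,
              a ∈ (M.emap e).support ∧ a.1 = z := by
            have hzmem : z ∈ ((G.induce S₀).ends x.1).map Subtype.val := by
              rw [induce_ends_val]; exact hz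
            replace hzmem := Sym2.mem_map.mp hzmem
            obtain ⟨a, ha, rfl⟩ := hzmem
            exact ⟨a, mem_support_of_mem_edges (M.emap e) x hx a ha, rfl⟩
          obtain ⟨a, hasupp, rfl⟩ := this
          exact hmeets a ⟨e, hasupp⟩ hzK
        exact x.2 (Finset.mem_union_left _ (hAmem _ hxD' hnP))
      exact hfree i ⟨M.restrictE hall⟩
  -- Step II : cardinality of the exchange
  have hDP : (D'.filter (fun f => P f)).card ≤ Δ.card := by
    have h1 : D'.card ≤ (A ∪ B).card := hopt _ stepI
    have h2 : (A ∪ B).card ≤ A.card + B.card := Finset.card_union_le _ _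
    have h3 : (D'.filter (fun f => P f)).card + A.card = D'.card :=
      Finset.card_filter_add_card_filter_not _
    have h4 : B.card ≤ Δ.card := by
      refine Finset.card_le_card_of_injOn (fun f => f.1) ?_ ?_
      · intro f hf
        exact (Finset.mem_filter.mp hf).2.1
      · intro f _ f' _ h
        exact Subtype.ext h
    omega
  -- Step III : each touched kept element yields a distinct edge of D' ∩ P
  refine le_trans ?_ (le_trans hDP le_rfl)
  rcases Set.eq_empty_or_nonempty {T | T ∈ 𝒮' ∧ ∃ f ∈ D', EInc G T f.1} with hemp | ⟨T₀, hT₀⟩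
  · rw [hemp]; simp
  · obtain ⟨-, f₀, hf₀, -⟩ := hT₀
    set pick : Set G.V → (G.induce S₀).E := fun T =>
      if h : ∃ f ∈ D', EInc G T f.1 then h.choose else f₀ with hpick
    have hKsub : ∀ T ∈ 𝒮', T ⊆ K' := by
      intro T hT x hx
      constructor
      · exact ⟨x, Or.inr ⟨T, h𝒮' hT, hx⟩, Reachable.refl (G := G.deleteEdges Δ) x⟩
      · rw [hS₀]
        intro hxR
        obtain ⟨T₂, hT₂, hxT₂⟩ := hxR
        have : T₂ = T := by
          by_contra hne
          exact Set.disjoint_left.mp (hfam.2.1 hT₂.1 (h𝒮' hT) hne) hxT₂ hx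
        exact hT₂.2 (this ▸ hT)
    have hmaps : ∀ T ∈ {T | T ∈ 𝒮' ∧ ∃ f ∈ D', EInc G T f.1},
        pick T ∈ (↑(D'.filter (fun f => P f)) : Set (G.induce S₀).E) := by
      rintro T ⟨hT𝒮, hex⟩
      simp only [hpick, dif_pos hex]
      obtain ⟨hmem, z, hz, hzT⟩ := hex.choose_spec
      exact Finset.mem_coe.mpr (Finset.mem_filter.mpr ⟨hmem, z, hz, hKsub T hT𝒮 hzT⟩)
    have hinj : Set.InjOn pick {T | T ∈ 𝒮' ∧ ∃ f ∈ D', EInc G T f.1} := by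
      rintro T ⟨hT, hexT⟩ T' ⟨hT', hexT'⟩ heq
      simp only [hpick, dif_pos hexT, dif_pos hexT'] at heq
      obtain ⟨-, hincT⟩ := hexT.choose_spec
      obtain ⟨-, hincT'⟩ := hexT'.choose_spec
      exact EInc_unique hfam (h𝒮' hT) (h𝒮' hT') _ hincT (heq ▸ hincT')
    have := Set.ncard_le_ncard_of_injOn pick hmaps hinj (Set.toFinite _)
    rwa [Set.ncard_coe_finset] at this

end Aux7
section Aux8

open Multigraph Multigraph.Walk

theorem OPT_induce_le {ι : Type} (F : ι → Multigraph) (hedge : ∀ i, Nonempty (F i).E)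
    (G : Multigraph) (S₀ : Set G.V) : OPT F (G.induce S₀) ≤ OPT F G := by
  classical
  obtain ⟨D, hcard, hfree⟩ := OPT_spec F hedge G
  set D'' : Finset (G.induce S₀).E := Finset.univ.filter (fun f => f.1 ∈ D) with hD''
  have hfree'' : FFree F ((G.induce S₀).deleteEdges D'') := by
    rintro i ⟨M⟩
    have hg : ∀ x : {f : (G.induce S₀).E // f ∉ D''}, x.1.1 ∉ D := by
      intro x hx
      exact x.2 (Finset.mem_filter.mpr ⟨Finset.mem_univ _, hx⟩)
    refine hfree i ⟨M.transport Subtype.val (fun x => ⟨x.1.1, hg x⟩)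
      Subtype.val_injective ?_ (fun x => (induce_ends_val x.1).symm)⟩
    intro a b hab
    exact Subtype.ext (Subtype.ext
      (congrArg (fun z : {e : G.E // e ∉ D} => z.1) hab))
  refine le_trans (OPT_le F _ hfree'') (le_trans ?_ (le_of_eq hcard))
  refine Finset.card_le_card_of_injOn (fun f => f.1) ?_ ?_
  · intro f hf
    exact (Finset.mem_filter.mp hf).2
  · intro f _ f' _ h
    exact Subtype.ext h

end Aux8
/-- pruning a bouquet, all of whose components after deleting `Δ`
are F-free, down to `d_F + |Δ|` elements preserves the optimum. -/
theorem bouquet_pruning {ι : Type} [Fintype ι] (F : ι → Multigraph)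
    (hconn : ∀ i, (F i).Connected) (hedge : ∀ i, Nonempty (F i).E)
    (hps : ∃ i, (F i).Planar ∧ (F i).Subcubic)
    (aF : ℕ) (haF : ∀ G : Multigraph, FFree F G → tcw G ≤ aF) (cF : ℕ)
    (G : Multigraph) (U : Set G.V) (𝒮 : Set (Set G.V))
    (hB : IsBouquet F (dConst F (4 * aF ^ 2 + 1) cF) G U 𝒮)
    (Δ : Finset G.E)
    (hΔ : ∀ v : G.V, v ∈ U ∪ ⋃₀ 𝒮 →
      FFreeOn F (G.deleteEdges Δ)
        {u : G.V | (G.deleteEdges Δ).Reachable u v})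
    (𝒮' : Set (Set G.V)) (h𝒮' : 𝒮' ⊆ 𝒮)
    (hkeep : 𝒮'.ncard = min 𝒮.ncard (dConst F (4 * aF ^ 2 + 1) cF + Δ.card)) :
    OPT F G = OPT F (G.induce (⋃₀ (𝒮 \ 𝒮'))ᶜ) := by
  classical
  obtain ⟨hfam, hdcard, hmax⟩ := hB
  have hd3 : 3 * maxEdges F < dConst F (4 * aF ^ 2 + 1) cF := by
    unfold dConst
    have := le_max_right (2 * (4 * aF ^ 2 + 1) * cF + 2 * (4 * aF ^ 2 + 1)) (3 * maxEdges F)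
    omega
  set S₀ : Set G.V := (⋃₀ (𝒮 \ 𝒮'))ᶜ with hS₀def
  refine le_antisymm ?_ (OPT_induce_le F hedge G S₀)
  obtain ⟨D', hD'card, hD'free⟩ := OPT_spec F hedge (G.induce S₀)
  have hopt : ∀ D₂ : Finset (G.induce S₀).E,
      FFree F ((G.induce S₀).deleteEdges D₂) → D'.card ≤ D₂.card := by
    intro D₂ h2
    rw [hD'card]
    exact OPT_le F _ h2
  set FG : Finset G.E := D'.image (fun f => f.1) with hFG
  have hFGcard : FG.card = D'.card := Finset.card_image_of_injective D' Subtype.val_injective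
  have hFGS₀ : ∀ e ∈ FG, ∀ x ∈ G.ends e, x ∈ S₀ := by
    intro e he x hx
    obtain ⟨f, hf, rfl⟩ := Finset.mem_image.mp he
    exact f.2 x hx
  have hpre : Finset.univ.filter (fun f : (G.induce S₀).E => f.1 ∈ FG) = D' := by
    ext f
    simp only [Finset.mem_filter, Finset.mem_univ, true_and, hFG, Finset.mem_image]
    constructor
    · rintro ⟨g, hg, hgf⟩
      rwa [show g = f from Subtype.ext hgf] at hg
    · intro hf
      exact ⟨f, hf, rfl⟩
  have hnbhds : ∀ T ∈ 𝒮, G.nbhd T = U := fun T hT => (hfam.1 T hT).2.2.1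
  have main : FFree F (G.deleteEdges FG) := by
    by_contra hcon
    have hcon' : ∃ i, Nonempty (Immersion (F i) (G.deleteEdges FG)) := by
      unfold FFree at hcon
      push_neg at hcon
      obtain ⟨i, hi⟩ := hcon
      exact ⟨i, hi⟩
    set NS : Set ℕ := {n | ∃ i, ∃ M : Immersion (F i) (G.deleteEdges FG),
      {T | T ∈ 𝒮 \ 𝒮' ∧ ∃ x ∈ M.allSupp, x ∈ T}.ncard = n} with hNS
    have hNSne : NS.Nonempty := by
      obtain ⟨i₀, ⟨M₀⟩⟩ := hcon'
      exact ⟨_, i₀, M₀, rfl⟩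
    obtain ⟨i, M, hMmin⟩ := Nat.sInf_mem hNSne
    by_cases h0 : {T | T ∈ 𝒮 \ 𝒮' ∧ ∃ x ∈ M.allSupp, x ∈ T} = ∅
    · -- the model avoids the removed region entirely
      have hsupp : ∀ (e : (F i).E), ∀ x ∈ (M.emap e).support, x ∈ S₀ := by
        intro e x hx
        rw [hS₀def]
        intro hxR
        obtain ⟨T, hT, hxT⟩ := hxR
        have hmem : T ∈ {T | T ∈ 𝒮 \ 𝒮' ∧ ∃ x ∈ M.allSupp, x ∈ T} := ⟨hT, x, ⟨e, hx⟩, hxT⟩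
        rw [h0] at hmem
        exact hmem
      have hvm : ∀ v, M.vmap v ∈ S₀ := by
        intro v
        obtain ⟨e, hx⟩ := M.vmap_mem_allSupp (hconn i) (hedge i) v
        exact hsupp e _ hx
      have M' := M.restrictV hsupp hvm
      rw [hpre] at M'
      exact hD'free i ⟨M'⟩
    · obtain ⟨S, hSrem, hStouch⟩ := Set.nonempty_iff_ne_empty.mpr h0
      have hScard : 𝒮'.ncard = dConst F (4 * aF ^ 2 + 1) cF + Δ.card := by
        rcases le_or_gt 𝒮.ncard (dConst F (4 * aF ^ 2 + 1) cF + Δ.card) with hle | hlt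
        · exfalso
          have h1 : 𝒮'.ncard = 𝒮.ncard := by rw [hkeep]; exact min_eq_left hle
          have h2 : 𝒮' = 𝒮 := Set.eq_of_subset_of_ncard_le h𝒮' (le_of_eq h1.symm)
            (Set.toFinite _)
          rw [h2] at hSrem
          exact hSrem.2 hSrem.1
        · rw [hkeep]
          exact min_eq_right (le_of_lt hlt)
      have hU2 : U.ncard ≤ 2 := U_ncard_le hfam ⟨S, hSrem.1⟩
      have hTA : {T | T ∈ 𝒮 ∧ ∃ x ∈ M.allSupp, x ∈ T}.ncard ≤ 3 * maxEdges F := by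
        refine le_trans (touched_bound M hfam.2.1 hnbhds hU2) ?_
        have hle : (F i).numEdges ≤ maxEdges F :=
          Finset.le_sup (f := fun j => (F j).numEdges) (Finset.mem_univ i)
        unfold Multigraph.numEdges at hle
        omega
      have hFT : {T | T ∈ 𝒮' ∧ ∃ e ∈ FG, EInc G T e}.ncard ≤ Δ.card := by
        have hre : {T | T ∈ 𝒮' ∧ ∃ e ∈ FG, EInc G T e} =
            {T | T ∈ 𝒮' ∧ ∃ f ∈ D', EInc G T f.1} := by
          ext T
          constructor
          · rintro ⟨h1, e, he, hinc⟩
            obtain ⟨f, hf, rfl⟩ := Finset.mem_image.mp he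
            exact ⟨h1, f, hf, hinc⟩
          · rintro ⟨h1, f, hf, hinc⟩
            exact ⟨h1, f.1, Finset.mem_image_of_mem _ hf, hinc⟩
        rw [hre]
        exact exchange_bound F hconn hedge hfam Δ hΔ 𝒮' h𝒮' hS₀def D' hD'free hopt
      have hexT : ∃ Tstar, Tstar ∈ 𝒮' ∧ ¬(∃ x ∈ M.allSupp, x ∈ Tstar) ∧
          ¬(∃ e ∈ FG, EInc G Tstar e) := by
        by_contra hno
        have hsub : 𝒮' ⊆ {T | T ∈ 𝒮 ∧ ∃ x ∈ M.allSupp, x ∈ T} ∪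
            {T | T ∈ 𝒮' ∧ ∃ e ∈ FG, EInc G T e} := by
          intro T hT
          by_cases hP : ∃ x ∈ M.allSupp, x ∈ T
          · exact Or.inl ⟨h𝒮' hT, hP⟩
          · by_cases hQ : ∃ e ∈ FG, EInc G T e
            · exact Or.inr ⟨hT, hQ⟩
            · exact absurd ⟨T, hT, hP, hQ⟩ hno
        have hcard := Set.ncard_le_ncard hsub (Set.toFinite _)
        have hcard2 := Set.ncard_union_le {T | T ∈ 𝒮 ∧ ∃ x ∈ M.allSupp, x ∈ T}
          {T | T ∈ 𝒮' ∧ ∃ e ∈ FG, EInc G T e}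
        rw [hScard] at hcard
        omega
      obtain ⟨Tstar, hTs𝒮', hTsnotouch, hTsnoF⟩ := hexT
      have hTs𝒮 : Tstar ∈ 𝒮 := h𝒮' hTs𝒮'
      have hSne : S ≠ Tstar := by
        rintro rfl
        exact hSrem.2 hTs𝒮'
      have hdisjST : Disjoint S Tstar := hfam.2.1 hSrem.1 hTs𝒮 hSne
      have hV : Nonempty G.V := ⟨((hfam.1 S hSrem.1).1).some⟩
      obtain ⟨σ, τ, hσinj, hτinj, hends, hσS, hσT, hσid, hτ1, hτ2, hτ3⟩ :=
        bouquet_exists_swap hV hdisjST (hnbhds S hSrem.1) (hnbhds Tstar hTs𝒮)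
          (hfam.2.2 S hSrem.1 Tstar hTs𝒮)
      have hSsubR : S ⊆ ⋃₀ (𝒮 \ 𝒮') := fun x hx => ⟨S, hSrem, hx⟩
      have hτFG : ∀ x : {e : G.E // e ∉ FG}, τ x.1 ∉ FG := by
        intro x hmem
        by_cases h1 : EInc G S x.1
        · exact hTsnoF ⟨τ x.1, hmem, hτ1 x.1 h1⟩
        · by_cases h2 : EInc G Tstar x.1
          · obtain ⟨z, hz, hzS⟩ := hτ2 x.1 h1 h2
            have hz0 : z ∈ S₀ := hFGS₀ _ hmem z hz
            rw [hS₀def] at hz0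
            exact hz0 (hSsubR hzS)
          · rw [hτ3 x.1 h1 h2] at hmem
            exact x.2 hmem
      set gτ : {e : G.E // e ∉ FG} → {e : G.E // e ∉ FG} := fun x => ⟨τ x.1, hτFG x⟩ with hgτ
      have hgτinj : Function.Injective gτ := fun a b h =>
        Subtype.ext (hτinj (congrArg (fun z : {e : G.E // e ∉ FG} => z.1) h))
      set M' : Immersion (F i) (G.deleteEdges FG) :=
        M.transport σ gτ hσinj hgτinj (fun e => hends e.1) with hM'
      have hsub' : {T | T ∈ 𝒮 \ 𝒮' ∧ ∃ x ∈ M'.allSupp, x ∈ T} ⊆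
          {T | T ∈ 𝒮 \ 𝒮' ∧ ∃ x ∈ M.allSupp, x ∈ T} \ {S} := by
        rintro T ⟨hTrem, x', hx', hx'T⟩
        replace hx' := (congrArg (x' ∈ ·) (Immersion.allSupp_transport (B := G.deleteEdges FG) M σ gτ hσinj hgτinj
          (fun e => hends e.1))).mp hx'
        obtain ⟨x, hx, rfl⟩ := hx'
        by_cases hxS : x ∈ S
        · exfalso
          have hσx : σ x ∈ Tstar := hσS x hxS
          have hTne : T ≠ Tstar := by
            rintro rfl
            exact hTrem.2 hTs𝒮'
          exact Set.disjoint_left.mp (hfam.2.1 hTrem.1 hTs𝒮 hTne) hx'T hσx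
        · by_cases hxT : x ∈ Tstar
          · exact absurd ⟨x, hx, hxT⟩ hTsnotouch
          · rw [hσid x hxS hxT] at hx'T
            refine ⟨⟨hTrem, x, hx, hx'T⟩, ?_⟩
            intro hTS
            rw [Set.mem_singleton_iff] at hTS
            subst hTS
            exact hxS hx'T
      have hlt : {T | T ∈ 𝒮 \ 𝒮' ∧ ∃ x ∈ M'.allSupp, x ∈ T}.ncard <
          {T | T ∈ 𝒮 \ 𝒮' ∧ ∃ x ∈ M.allSupp, x ∈ T}.ncard := by
        have h1 := Set.ncard_le_ncard hsub' (Set.toFinite _)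
        have h2 : ({T | T ∈ 𝒮 \ 𝒮' ∧ ∃ x ∈ M.allSupp, x ∈ T} \ {S}).ncard <
            {T | T ∈ 𝒮 \ 𝒮' ∧ ∃ x ∈ M.allSupp, x ∈ T}.ncard :=
          Set.ncard_diff_singleton_lt_of_mem ⟨hSrem, hStouch⟩ (Set.toFinite _)
        omega
      have hle : sInf NS ≤ {T | T ∈ 𝒮 \ 𝒮' ∧ ∃ x ∈ M'.allSupp, x ∈ T}.ncard :=
        Nat.sInf_le ⟨i, M', rfl⟩
      omega
  have hfin := OPT_le F G main
  rw [hFGcard, hD'card] at hfin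
  exact hfin
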